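/- arXiv:1612.09104 — 7 statements merged into one kernel-verified Lean document; each statement's English description precedes it below -/
import Mathlib

section
/- Define φ_{h,d}(s) = ∑_{k=1}^{d-1} e(ks/d) / ((1 - e(kh/d))(1 - e(-k/d))) for an integer d ≥ 1, an integer h coprime to d, and s ∈ ℤ, where e(x) = exp(2πi x). Then φ_{h,d}(s) = d·∑_{u=0}^{d-1} (u/d - (d-1)/(2d))·({(hu+s)/d} - (d-1)/(2d)), where {x} denotes the fractional part of x. -/
/-!
Write `ζ = e(1/d)`. For `x ^ d = 1 ≠ x` one has the finite Fourier expansion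
`(1 - x)⁻¹ = -(1/d) ∑_{v<d} (v - (d-1)/2) x^v`, which applies to both factors `1 - ζ^{kh}`
and `1 - ζ^{-k}` because `h` is coprime to `d`. Summing over `k`, the orthogonality relation
`∑_{k=1}^{d-1} ζ^{km} = d·[d ∣ m] - 1` collapses the resulting double sum over `(a, b)` to the
diagonal `b ≡ ha + s (mod d)`; the `-1` contributes nothing since the centred sawtooth
`v - (d-1)/2` has mean zero over `0 ≤ v < d`.
-/

/-- `e(x) = exp(2πi x)`. -/
noncomputable def ee (x : ℝ) : ℂ := Complex.exp (2 * Real.pi * Complex.I * x)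

/-- The generalized Dedekind sum
`φ_{h,d}(s) = ∑_{k=1}^{d-1} e(ks/d) / ((1 - e(kh/d)) (1 - e(-k/d)))`. -/
noncomputable def phi (h : ℤ) (d : ℕ) (s : ℤ) : ℂ :=
  ∑ k ∈ Finset.Ico 1 d,
    ee ((k : ℝ) * (s : ℝ) / d) /
      ((1 - ee ((k : ℝ) * (h : ℝ) / d)) * (1 - ee (-(k : ℝ) / d)))

open Finset

theorem sub_one_mul_sum_range_natCast_mul_pow {R : Type*} [CommRing R] (x : R) (n : ℕ) :
    (x - 1) * ∑ v ∈ range n, (v : R) * x ^ v = (n - 1) * x ^ n + 1 - ∑ v ∈ range n, x ^ v := by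
  induction n with
  | zero => simp
  | succ n ih =>
    rw [sum_range_succ, sum_range_succ, mul_add, ih]
    push_cast
    ring

theorem sum_range_ite_dvd_sub {M : Type*} [AddCommMonoid M] {n : ℕ} (hn : 0 < n) (m : ℤ)
    (f : ℤ → M) : ∑ b ∈ range n, (if (n : ℤ) ∣ m - b then f b else 0) = f (m % n) := by
  have hn' : (0 : ℤ) < n := by exact_mod_cast hn
  have hdvd_iff : ∀ b ∈ range n, (n : ℤ) ∣ m - b ↔ (b : ℤ) = m % n := fun b hb => by
    rw [← Int.modEq_iff_dvd, Int.ModEq, Int.emod_eq_of_lt (by positivity) (by simpa using hb)]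
  obtain ⟨r, hr⟩ : ∃ r : ℕ, (r : ℤ) = m % n := ⟨_, Int.toNat_of_nonneg (Int.emod_nonneg m hn'.ne')⟩
  have hr_mem : r ∈ range n := by
    rw [mem_range, ← Int.ofNat_lt, hr]
    exact Int.emod_lt_of_pos m hn'
  rw [sum_eq_single_of_mem r hr_mem, if_pos ((hdvd_iff r hr_mem).2 hr), hr]
  intro b hb hbr
  rw [if_neg (mt (hdvd_iff b hb).1 fun hb' => hbr (by exact_mod_cast hb'.trans hr.symm))]

section Field

variable {K : Type*} [Field K]

theorem IsPrimitiveRoot.zpow_pow_eq_one {ζ : K} {n : ℕ} (hζ : IsPrimitiveRoot ζ n) (m : ℤ) :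
    (ζ ^ m) ^ n = 1 := by
  rw [← zpow_natCast, ← zpow_mul, mul_comm, zpow_mul, zpow_natCast, hζ.pow_eq_one, one_zpow]

theorem inv_one_sub_eq_of_pow_eq_one {x : K} {n : ℕ} (hn : (n : K) ≠ 0) (hx : x ≠ 1)
    (hxn : x ^ n = 1) :
    (1 - x)⁻¹ = -(n : K)⁻¹ * ∑ v ∈ range n, ((v : K) - (n - 1) / 2) * x ^ v := by
  have hgeom : ∑ v ∈ range n, x ^ v = 0 := by rw [geom_sum_eq hx, hxn, sub_self, zero_div]
  have hweighted : (x - 1) * ∑ v ∈ range n, (v : K) * x ^ v = n := by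
    rw [sub_one_mul_sum_range_natCast_mul_pow, hxn, hgeom]
    ring
  simp_rw [sub_mul, sum_sub_distrib, ← mul_sum, hgeom, mul_zero, sub_zero]
  have hx' : 1 - x ≠ 0 := sub_ne_zero.2 hx.symm
  field_simp
  linear_combination -hweighted

theorem IsPrimitiveRoot.sum_Ico_zpow_mul {ζ : K} {n : ℕ} (hζ : IsPrimitiveRoot ζ n) (hn : 0 < n)
    (m : ℤ) : ∑ k ∈ Ico 1 n, ζ ^ ((k : ℤ) * m) = (if (n : ℤ) ∣ m then (n : K) else 0) - 1 := by
  have hpow : ∀ k : ℕ, ζ ^ ((k : ℤ) * m) = (ζ ^ m) ^ k := fun k => by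
    rw [mul_comm, zpow_mul, zpow_natCast]
  rw [sum_Ico_eq_sub _ hn, sum_range_one]
  simp_rw [hpow, pow_zero]
  split_ifs with hdvd
  · simp [(hζ.zpow_eq_one_iff_dvd m).2 hdvd]
  · rw [geom_sum_eq (mt (hζ.zpow_eq_one_iff_dvd m).1 hdvd), hζ.zpow_pow_eq_one, sub_self,
      zero_div]

variable [CharZero K]

theorem sum_range_sub_mean_eq_zero (n : ℕ) :
    ∑ v ∈ range n, ((v : K) - (n - 1) / 2) = 0 := by
  have hgauss : (∑ v ∈ range n, (v : K)) * 2 = n * (n - 1) := by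
    induction n with
    | zero => simp
    | succ n ih =>
      rw [sum_range_succ, add_mul, ih]
      push_cast
      ring
  rw [sum_sub_distrib, sum_const, card_range, nsmul_eq_mul]
  linear_combination hgauss / 2

theorem IsPrimitiveRoot.inv_one_sub_zpow {ζ : K} {d : ℕ} (hζ : IsPrimitiveRoot ζ d) (hd : 0 < d)
    {m : ℤ} (hm : ¬ (d : ℤ) ∣ m) :
    (1 - ζ ^ m)⁻¹ = -(d : K)⁻¹ * ∑ v ∈ range d, ((v : K) - (d - 1) / 2) * ζ ^ (m * v) := by
  simp_rw [zpow_mul, zpow_natCast]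
  exact inv_one_sub_eq_of_pow_eq_one (Nat.cast_ne_zero.2 hd.ne')
    (mt (hζ.zpow_eq_one_iff_dvd m).1 hm) (hζ.zpow_pow_eq_one m)

theorem IsPrimitiveRoot.zpow_div_one_sub_mul_one_sub_eq_sum {ζ : K} {d : ℕ}
    (hζ : IsPrimitiveRoot ζ d) (hd : 0 < d) {h : ℤ} (hcop : IsCoprime (d : ℤ) h) (s : ℤ) {k : ℤ}
    (hk : ¬ (d : ℤ) ∣ k) :
    ζ ^ (k * s) / ((1 - ζ ^ (k * h)) * (1 - ζ ^ (-k))) =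
      (d : K)⁻¹ ^ 2 * ∑ a ∈ range d, ∑ b ∈ range d,
        ((a : K) - (d - 1) / 2) * ((b : K) - (d - 1) / 2) * ζ ^ (k * (h * a + s - b)) := by
  have hζ0 : ζ ≠ 0 := hζ.ne_zero hd.ne'
  rw [div_eq_mul_inv, mul_inv, hζ.inv_one_sub_zpow hd fun hkh => hk (hcop.dvd_of_dvd_mul_right hkh),
    hζ.inv_one_sub_zpow hd (by rwa [dvd_neg])]
  rw [show ∀ X Y : K, ζ ^ (k * s) * (-(d : K)⁻¹ * X * (-(d : K)⁻¹ * Y)) =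
    (d : K)⁻¹ ^ 2 * (ζ ^ (k * s) * (X * Y)) from fun _ _ => by ring, sum_mul_sum, mul_sum]
  congr 1
  refine sum_congr rfl fun a _ => ?_
  rw [mul_sum]
  refine sum_congr rfl fun b _ => ?_
  rw [show k * (h * a + s - b) = k * s + k * h * a + -k * b by ring, zpow_add₀ hζ0, zpow_add₀ hζ0]
  ring

theorem IsPrimitiveRoot.sum_Ico_zpow_div_one_sub_mul_one_sub {ζ : K} {d : ℕ}
    (hζ : IsPrimitiveRoot ζ d) (hd : 0 < d) {h : ℤ} (hcop : IsCoprime (d : ℤ) h) (s : ℤ) :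
    ∑ k ∈ Ico 1 d, ζ ^ ((k : ℤ) * s) / ((1 - ζ ^ ((k : ℤ) * h)) * (1 - ζ ^ (-(k : ℤ)))) =
      (d : K)⁻¹ * ∑ a ∈ range d,
        ((a : K) - (d - 1) / 2) * (((h * a + s) % d : ℤ) - (d - 1) / 2) := by
  have hk_ndvd (k : ℕ) (hk : k ∈ Ico 1 d) : ¬ (d : ℤ) ∣ k := by
    rw [Int.natCast_dvd_natCast]
    exact Nat.not_dvd_of_pos_of_lt (mem_Ico.1 hk).1 (mem_Ico.1 hk).2
  set c : K := ((d : K) - 1) / 2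
  have hcentred : ∑ b ∈ range d, ((b : K) - c) = 0 := sum_range_sub_mean_eq_zero d
  calc _ = ∑ k ∈ Ico 1 d, (d : K)⁻¹ ^ 2 * ∑ a ∈ range d, ∑ b ∈ range d,
          ((a : K) - c) * ((b : K) - c) * ζ ^ ((k : ℤ) * (h * a + s - b)) :=
        sum_congr rfl fun k hk => hζ.zpow_div_one_sub_mul_one_sub_eq_sum hd hcop s (hk_ndvd k hk)
    _ = (d : K)⁻¹ ^ 2 * ∑ a ∈ range d, ((a : K) - c) * ∑ b ∈ range d, ((b : K) - c) *
          ∑ k ∈ Ico 1 d, ζ ^ ((k : ℤ) * (h * a + s - b)) := by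
      simp_rw [mul_sum, mul_assoc]
      rw [sum_comm]
      refine sum_congr rfl fun a _ => ?_
      rw [sum_comm]
    _ = (d : K)⁻¹ ^ 2 * ∑ a ∈ range d, ((a : K) - c) *
          ∑ b ∈ range d, ((b : K) - c) * ((if (d : ℤ) ∣ h * a + s - b then (d : K) else 0) - 1) := by
      simp_rw [hζ.sum_Ico_zpow_mul hd]
    _ = (d : K)⁻¹ ^ 2 * ∑ a ∈ range d,
          (d : K) * (((a : K) - c) * (((h * a + s) % d : ℤ) - c)) := by
      congr 1
      refine sum_congr rfl fun a _ => ?_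
      rw [mul_left_comm]
      congr 1
      rw [sum_congr rfl fun b _ => mul_sub_one _ _, sum_sub_distrib, hcentred, sub_zero]
      simp_rw [mul_ite, mul_zero]
      convert sum_range_ite_dvd_sub hd (h * a + s) (fun b => (d : K) * ((b : K) - c)) using 3
      push_cast
      ring
    _ = _ := by
      rw [← mul_sum]
      field_simp

end Field

theorem ee_intCast_div (m : ℤ) (d : ℕ) :
    ee ((m : ℝ) / d) = Complex.exp (2 * Real.pi * Complex.I / d) ^ m := by
  rw [ee, ← Complex.exp_int_mul]
  push_cast
  ring_nf

theorem phi_eq_sum_zpow (h : ℤ) (d : ℕ) (s : ℤ) :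
    phi h d s = ∑ k ∈ Ico 1 d, Complex.exp (2 * Real.pi * Complex.I / d) ^ ((k : ℤ) * s) /
      ((1 - Complex.exp (2 * Real.pi * Complex.I / d) ^ ((k : ℤ) * h)) *
        (1 - Complex.exp (2 * Real.pi * Complex.I / d) ^ (-(k : ℤ)))) := by
  refine sum_congr rfl fun k _ => ?_
  simp only [← ee_intCast_div]
  push_cast
  rfl

theorem phi_eq_real_sum (d : ℕ) (hd : 1 ≤ d) (h : ℤ) (hcop : Int.gcd h d = 1) (s : ℤ) :
    phi h d s =
      ((d : ℝ) * ∑ u ∈ Finset.range d,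
        ((u : ℝ) / d - ((d : ℝ) - 1) / (2 * d)) *
          (Int.fract (((h : ℝ) * u + (s : ℝ)) / d) - ((d : ℝ) - 1) / (2 * d)) : ℝ) := by
  have hdh : IsCoprime (d : ℤ) h := by rwa [Int.isCoprime_iff_gcd_eq_one, Int.gcd_comm]
  have hfract (u : ℕ) :
      Int.fract (((h : ℝ) * u + (s : ℝ)) / d) = (((h * u + s) % d : ℤ) : ℝ) / d := by
    rw [← Int.fract_div_intCast_eq_div_intCast_mod]
    push_cast
    rfl
  have hζ := Complex.isPrimitiveRoot_exp d (by omega)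
  rw [phi_eq_sum_zpow, hζ.sum_Ico_zpow_div_one_sub_mul_one_sub hd hdh s]
  simp_rw [hfract, mul_sum]
  push_cast
  refine sum_congr rfl fun u _ => ?_
  field_simp
end

section
/- With φ_{h,d}(s) = ∑_{k=1}^{d-1} e(ks/d)/((1-e(kh/d))(1-e(-k/d))): if d is coprime to 6 then φ_{h,d}(s) is an integer for every integer s. -/
open Finset

lemma ee_eq_one_iff {x : ℝ} : ee x = 1 ↔ ∃ n : ℤ, x = n := by
  rw [ee, Complex.exp_eq_one_iff]
  constructor
  · rintro ⟨n, hn⟩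
    refine ⟨n, ?_⟩
    have h2 : (2 * (Real.pi:ℂ) * Complex.I) ≠ 0 := by
      simp [Real.pi_ne_zero, Complex.I_ne_zero]
    have hx : (x:ℂ) = n := by
      apply mul_left_cancel₀ h2
      rw [hn]; ring
    exact_mod_cast hx
  · rintro ⟨n, rfl⟩
    exact ⟨n, by push_cast; ring⟩

lemma ee_int (n : ℤ) : ee n = 1 := ee_eq_one_iff.mpr ⟨n, rfl⟩

lemma ee_add (x y : ℝ) : ee (x + y) = ee x * ee y := by
  simp only [ee, ← Complex.exp_add]; congr 1; push_cast; ring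

lemma ee_pow (x : ℝ) (n : ℕ) : ee x ^ n = ee (n * x) := by
  rw [ee, ee, ← Complex.exp_nat_mul]; congr 1; push_cast; ring

lemma geom_zero {z : ℂ} {d : ℕ} (hz : z ^ d = 1) (h1 : z ≠ 1) :
    ∑ k ∈ range d, z ^ k = 0 := by
  rw [geom_sum_eq h1, hz]; simp

lemma weighted (z : ℂ) (n : ℕ) :
    (1 - z) * ∑ j ∈ range n, (j : ℂ) * z ^ j
      = (∑ j ∈ range n, z ^ j) - 1 - ((n : ℂ) - 1) * z ^ n := by
  induction n with
  | zero => simp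
  | succ n ih =>
    rw [sum_range_succ, sum_range_succ, mul_add, ih]
    push_cast; ring

lemma one_sub_mul_weighted {z : ℂ} {d : ℕ} (hzd : z ^ d = 1) (hz : z ≠ 1) :
    (1 - z) * (∑ j ∈ range d, (j : ℂ) * z ^ j) = -(d : ℂ) := by
  rw [weighted, geom_zero hzd hz, hzd]; ring

lemma ee_ne_one_of_not_dvd {d : ℕ} (hd : 1 ≤ d) {a : ℤ} (hnd : ¬ (d:ℤ) ∣ a) :
    ee ((a : ℝ) / d) ≠ 1 := by
  intro heq
  obtain ⟨n, hn⟩ := ee_eq_one_iff.mp heq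
  have hdR : (d : ℝ) ≠ 0 := Nat.cast_ne_zero.mpr (by omega)
  rw [div_eq_iff hdR] at hn
  have : a = n * d := by exact_mod_cast hn
  exact hnd ⟨n, by rw [this, mul_comm]⟩

lemma ee_pow_d {d : ℕ} (hd : 1 ≤ d) (a : ℤ) :
    ee ((a : ℝ) / d) ^ d = 1 := by
  rw [ee_pow]
  have hdR : (d : ℝ) ≠ 0 := Nat.cast_ne_zero.mpr (by omega)
  rw [show (d : ℝ) * ((a:ℝ)/d) = (a:ℝ) by field_simp]
  exact ee_int a

lemma ee_inner_sum (d : ℕ) (hd : 1 ≤ d) (a : ℤ) :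
    ∑ k ∈ Finset.Ico 1 d, (ee ((a:ℝ)/d)) ^ k
      = (if (d:ℤ) ∣ a then (d:ℂ) else 0) - 1 := by
  have hsplit : ∑ k ∈ range d, (ee ((a:ℝ)/d))^k
      = (ee ((a:ℝ)/d))^0 + ∑ k ∈ Finset.Ico 1 d, (ee ((a:ℝ)/d))^k := by
    rw [range_eq_Ico, Finset.sum_eq_sum_Ico_succ_bot hd]
  by_cases hdvd : (d:ℤ) ∣ a
  · obtain ⟨n, hn⟩ := hdvd
    have hw : ee ((a:ℝ)/d) = 1 := by
      have hdR : (d : ℝ) ≠ 0 := Nat.cast_ne_zero.mpr (by omega)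
      have harg : ((a:ℝ)/d) = ((n:ℤ):ℝ) := by
        rw [hn]; push_cast; field_simp
      rw [harg]; exact ee_int n
    rw [if_pos ⟨n, hn⟩]
    simp only [hw, one_pow, Finset.sum_const, Nat.card_Ico, nsmul_eq_mul, mul_one]
    rw [Nat.cast_sub hd]
    simp
  · have hw1 : ee ((a:ℝ)/d) ≠ 1 := ee_ne_one_of_not_dvd hd hdvd
    have h0 : ∑ k ∈ range d, (ee ((a:ℝ)/d))^k = 0 := geom_zero (ee_pow_d hd a) hw1
    rw [h0] at hsplit
    rw [if_neg hdvd]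
    simp only [pow_zero] at hsplit
    linear_combination -hsplit

lemma term_eq (d : ℕ) (hd : 1 ≤ d) (h : ℤ) (hcop : Int.gcd h d = 1) (s : ℤ) (k : ℕ)
    (hk1 : 1 ≤ k) (hkd : k < d) :
    ee ((k : ℝ) * (s : ℝ) / d) / ((1 - ee ((k : ℝ) * (h : ℝ) / d)) * (1 - ee (-(k : ℝ) / d)))
    = (∑ i ∈ range d, ∑ j ∈ range d,
        (i:ℂ) * (j:ℂ) * (ee (((s + h * i - j : ℤ) : ℝ) / d)) ^ k) / (d:ℂ)^2 := by
  have hdR : (d : ℝ) ≠ 0 := Nat.cast_ne_zero.mpr (by omega)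
  have hdC : (d : ℂ) ≠ 0 := Nat.cast_ne_zero.mpr (by omega)
  have hndk : ¬ (d:ℤ) ∣ (k : ℤ) := by
    intro hdvd
    have := Int.le_of_dvd (by exact_mod_cast hk1) hdvd
    omega
  set z1 : ℂ := ee ((k : ℝ) * (h : ℝ) / d) with hz1def
  set z2 : ℂ := ee (-(k : ℝ) / d) with hz2def
  have hz1a : z1 = ee (((k * h : ℤ) : ℝ) / d) := by rw [hz1def]; congr 1; push_cast; ring
  have hz2a : z2 = ee (((-k : ℤ) : ℝ) / d) := by rw [hz2def]; congr 1; push_cast; ring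
  have hz1d : z1 ^ d = 1 := by rw [hz1a]; exact ee_pow_d hd _
  have hz2d : z2 ^ d = 1 := by rw [hz2a]; exact ee_pow_d hd _
  have hz1ne : z1 ≠ 1 := by
    rw [hz1a]
    apply ee_ne_one_of_not_dvd hd
    intro hdvd
    have hco : IsCoprime (d : ℤ) h := by
      rw [Int.isCoprime_iff_gcd_eq_one, Int.gcd_comm]; exact hcop
    exact hndk (hco.dvd_of_dvd_mul_right hdvd)
  have hz2ne : z2 ≠ 1 := by
    rw [hz2a]
    apply ee_ne_one_of_not_dvd hd
    intro hdvd
    exact hndk ((dvd_neg).mp hdvd)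
  have e1 : (1 - z1) * (∑ i ∈ range d, (i : ℂ) * z1 ^ i) = -(d : ℂ) :=
    one_sub_mul_weighted hz1d hz1ne
  have e2 : (1 - z2) * (∑ j ∈ range d, (j : ℂ) * z2 ^ j) = -(d : ℂ) :=
    one_sub_mul_weighted hz2d hz2ne
  have h1ne : (1 - z1) ≠ 0 := sub_ne_zero.mpr (Ne.symm hz1ne)
  have h2ne : (1 - z2) ≠ 0 := sub_ne_zero.mpr (Ne.symm hz2ne)
  rw [div_eq_div_iff (mul_ne_zero h1ne h2ne) (pow_ne_zero 2 hdC)]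
  have hterm : ∀ i j : ℕ,
      ee ((k:ℝ)*(s:ℝ)/d) * (((i:ℂ) * z1^i) * ((j:ℂ) * z2^j))
        = (i:ℂ)*(j:ℂ) * ee (((s + h * i - j : ℤ):ℝ)/d) ^ k := by
    intro i j
    rw [hz1def, hz2def, ee_pow, ee_pow, ee_pow]
    have harg : (k:ℝ)*(s:ℝ)/d + ((i:ℝ) * ((k:ℝ)*(h:ℝ)/d) + (j:ℝ)*(-(k:ℝ)/d))
        = (k:ℝ) * (((s + h * i - j : ℤ):ℝ)/d) := by
      push_cast; field_simp; ring
    calc ee ((k:ℝ)*(s:ℝ)/d) * (((i:ℂ) * ee ((i:ℝ) * ((k:ℝ)*(h:ℝ)/d))) * ((j:ℂ) * ee ((j:ℝ)*(-(k:ℝ)/d))))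
        = (i:ℂ)*(j:ℂ) * (ee ((k:ℝ)*(s:ℝ)/d) * (ee ((i:ℝ)*((k:ℝ)*(h:ℝ)/d)) * ee ((j:ℝ)*(-(k:ℝ)/d)))) := by
          ring
      _ = (i:ℂ)*(j:ℂ) * ee ((k:ℝ)*(s:ℝ)/d + ((i:ℝ)*((k:ℝ)*(h:ℝ)/d) + (j:ℝ)*(-(k:ℝ)/d))) := by
          rw [ee_add, ee_add]
      _ = _ := by rw [harg]
  have expand : ∑ i ∈ range d, ∑ j ∈ range d,
      (i:ℂ) * (j:ℂ) * (ee (((s + h * i - j : ℤ) : ℝ) / d)) ^ k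
      = ee ((k : ℝ) * (s : ℝ) / d) *
        (∑ i ∈ range d, (i : ℂ) * z1 ^ i) * (∑ j ∈ range d, (j : ℂ) * z2 ^ j) := by
    conv_rhs => rw [mul_assoc, Finset.sum_mul_sum, Finset.mul_sum]
    apply Finset.sum_congr rfl; intro i _
    rw [Finset.mul_sum]
    apply Finset.sum_congr rfl; intro j _
    exact (hterm i j).symm
  rw [expand]
  calc ee ((k:ℝ) * (s:ℝ) / d) * ((d:ℂ)^2)
      = ee ((k:ℝ) * (s:ℝ) / d) * ((-(d:ℂ)) * (-(d:ℂ))) := by ring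
    _ = ee ((k:ℝ) * (s:ℝ) / d) *
        (((1 - z1) * (∑ i ∈ range d, (i : ℂ) * z1 ^ i)) *
         ((1 - z2) * (∑ j ∈ range d, (j : ℂ) * z2 ^ j))) := by rw [e1, e2]
    _ = _ := by ring

lemma six_sum_sq (n : ℕ) :
    6 * ∑ i ∈ range n, (i : ℤ) ^ 2 = n * ((n : ℤ) - 1) * (2 * n - 1) := by
  induction n with
  | zero => simp
  | succ n ih =>
    rw [sum_range_succ, mul_add, ih]; push_cast; ring

lemma gauss (d : ℕ) (hodd : d % 2 = 1) :
    ∑ i ∈ range d, i = d * ((d - 1) / 2) := by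
  have h2 : (∑ i ∈ range d, i) * 2 = d * (d - 1) := Finset.sum_range_id_mul_two d
  generalize ha : (d - 1) / 2 = a at *
  have hm : d - 1 = 2 * a := by omega
  apply Nat.eq_of_mul_eq_mul_right (show 0 < 2 by norm_num)
  rw [h2, hm]; ring

lemma odd_of_coprime_six (d : ℕ) (hd6 : Nat.Coprime d 6) : d % 2 = 1 := by
  rcases Nat.even_or_odd d with he | ho
  · exfalso
    obtain ⟨k, hk⟩ := he
    have : 2 ∣ Nat.gcd d 6 := Nat.dvd_gcd ⟨k, by omega⟩ (by norm_num)
    rw [hd6] at this; omega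
  · obtain ⟨k, hk⟩ := ho; omega

lemma dvd_T (d : ℕ) (hd : 1 ≤ d) (hd6 : Nat.Coprime d 6) (h s : ℤ) :
    (d : ℤ) ∣ ∑ i ∈ range d, (i : ℤ) * ((s + h * i) % d) := by
  have hodd : d % 2 = 1 := odd_of_coprime_six d hd6
  set m := (d - 1) / 2 with hm
  have hsum1 : (∑ i ∈ range d, (i : ℤ)) = (d : ℤ) * m := by
    rw [hm, ← Nat.cast_sum, gauss d hodd]; push_cast; ring
  have hsq : (d : ℤ) ∣ ∑ i ∈ range d, (i : ℤ) ^ 2 := by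
    have h6 : (d : ℤ) ∣ 6 * ∑ i ∈ range d, (i : ℤ) ^ 2 :=
      ⟨((d : ℤ) - 1) * (2 * (d : ℤ) - 1), by rw [six_sum_sq]; ring⟩
    have hco : IsCoprime (d : ℤ) 6 := by
      rw [show ((6:ℤ)) = ((6:ℕ):ℤ) by norm_num, Nat.isCoprime_iff_coprime]
      exact hd6
    exact hco.dvd_of_dvd_mul_left h6
  have key : (d : ℤ) ∣ ∑ i ∈ range d, (i : ℤ) * (s + h * i) := by
    have heq : (∑ i ∈ range d, (i : ℤ) * (s + h * i))
        = s * (∑ i ∈ range d, (i : ℤ)) + h * ∑ i ∈ range d, (i : ℤ) ^ 2 := by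
      rw [Finset.mul_sum, Finset.mul_sum, ← Finset.sum_add_distrib]
      apply Finset.sum_congr rfl; intro i _; ring
    rw [heq, hsum1]
    exact dvd_add ⟨s * m, by ring⟩ (Dvd.dvd.mul_left hsq h)
  have hmods : (∑ i ∈ range d, (i : ℤ) * ((s + h * i) % d)) % d
      = (∑ i ∈ range d, (i : ℤ) * (s + h * i)) % d := by
    rw [Finset.sum_int_mod]
    conv_rhs => rw [Finset.sum_int_mod]
    congr 1
    apply Finset.sum_congr rfl
    intro i _
    conv_rhs => rw [Int.mul_emod]
    rw [Int.mul_emod, Int.emod_emod_of_dvd _ dvd_rfl]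
  rw [Int.dvd_iff_emod_eq_zero] at key ⊢
  rw [hmods, key]

theorem phi_integral_of_coprime_six (d : ℕ) (hd : 1 ≤ d) (hd6 : Nat.Coprime d 6)
    (h : ℤ) (hcop : Int.gcd h d = 1) (s : ℤ) :
    ∃ z : ℤ, phi h d s = (z : ℂ) := by
  have hdC : (d : ℂ) ≠ 0 := Nat.cast_ne_zero.mpr (by omega)
  have hdpos : (0 : ℤ) < d := by exact_mod_cast hd
  have hodd : d % 2 = 1 := odd_of_coprime_six d hd6
  set m : ℕ := (d - 1) / 2 with hmdef
  set j0 : ℕ → ℕ := fun i => ((s + h * i) % (d:ℤ)).toNat with hj0def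
  have hj0cast : ∀ i : ℕ, ((j0 i : ℕ) : ℤ) = (s + h * i) % (d:ℤ) := by
    intro i
    exact Int.toNat_of_nonneg (Int.emod_nonneg _ (by omega))
  have hj0lt : ∀ i : ℕ, j0 i < d := by
    intro i
    have h1 := Int.emod_lt_of_pos (s + h * i) hdpos
    have h2 := Int.emod_nonneg (s + h * i) (show (d:ℤ) ≠ 0 by omega)
    have := hj0cast i
    omega
  have hcond : ∀ i : ℕ, ∀ j ∈ range d, ((d:ℤ) ∣ (s + h * i - j) ↔ j = j0 i) := by
    intro i j hj
    rw [mem_range] at hj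
    constructor
    · intro hdvd
      have hmod : (s + h * i) % (d:ℤ) = (j : ℤ) % d := by
        rw [Int.emod_eq_emod_iff_emod_sub_eq_zero]
        exact Int.emod_eq_zero_of_dvd hdvd
      have hjj : (j : ℤ) % d = j :=
        Int.emod_eq_of_lt (by positivity) (by exact_mod_cast hj)
      have := hj0cast i
      omega
    · intro hje
      subst hje
      refine ⟨(s + h * i) / d, ?_⟩
      rw [hj0cast i, Int.emod_def]; ring
  -- step 1: phi as a double sum
  have step1 : phi h d s
      = (∑ i ∈ range d, ∑ j ∈ range d, (i:ℂ) * (j:ℂ) *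
          ((if (d:ℤ) ∣ (s + h * i - j) then (d:ℂ) else 0) - 1)) / (d:ℂ)^2 := by
    unfold phi
    have hterms : ∀ k ∈ Finset.Ico 1 d,
        ee ((k : ℝ) * (s : ℝ) / d) /
          ((1 - ee ((k : ℝ) * (h : ℝ) / d)) * (1 - ee (-(k : ℝ) / d)))
        = (∑ i ∈ range d, ∑ j ∈ range d,
            (i:ℂ) * (j:ℂ) * (ee (((s + h * i - j : ℤ) : ℝ) / d)) ^ k) / (d:ℂ)^2 := by
      intro k hk
      rw [mem_Ico] at hk
      exact term_eq d hd h hcop s k hk.1 hk.2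
    rw [Finset.sum_congr rfl hterms, ← Finset.sum_div]
    congr 1
    rw [Finset.sum_comm]
    apply Finset.sum_congr rfl; intro i _
    rw [Finset.sum_comm]
    apply Finset.sum_congr rfl; intro j _
    rw [← Finset.mul_sum, ee_inner_sum d hd _]
  -- step 2: evaluate inner sum
  have step2 : ∀ i ∈ range d,
      ∑ j ∈ range d, (i:ℂ) * (j:ℂ) *
          ((if (d:ℤ) ∣ (s + h * i - j) then (d:ℂ) else 0) - 1)
      = (i:ℂ) * (j0 i : ℂ) * (d:ℂ) - (i:ℂ) * ∑ j ∈ range d, (j:ℂ) := by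
    intro i _
    have hper : ∀ j ∈ range d,
        (i:ℂ) * (j:ℂ) * ((if (d:ℤ) ∣ (s + h * i - j) then (d:ℂ) else 0) - 1)
        = (if j = j0 i then (i:ℂ) * (j:ℂ) * (d:ℂ) else 0) - (i:ℂ) * (j:ℂ) := by
      intro j hj
      rw [if_congr (hcond i j hj) rfl rfl]
      split_ifs <;> ring
    rw [Finset.sum_congr rfl hper, Finset.sum_sub_distrib,
      Finset.sum_ite_eq' (range d) (j0 i), if_pos (mem_range.mpr (hj0lt i)),
      ← Finset.mul_sum]
  set T : ℤ := ∑ i ∈ range d, (i : ℤ) * ((s + h * i) % d) with hTdef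
  have hQ : ∑ i ∈ range d, (i:ℂ) = (d:ℂ) * (m:ℂ) := by
    rw [← Nat.cast_sum, gauss d hodd]; push_cast; ring
  have hP : ∑ i ∈ range d, (i:ℂ) * (j0 i : ℂ) = (T:ℂ) := by
    rw [hTdef]; push_cast
    apply Finset.sum_congr rfl; intro i _
    rw [show ((j0 i : ℕ):ℂ) = (((j0 i : ℕ):ℤ):ℂ) by norm_cast, hj0cast i]
  obtain ⟨t, ht⟩ := dvd_T d hd hd6 h s
  refine ⟨t - (m:ℤ)^2, ?_⟩
  have hTC : (T:ℂ) = (d:ℂ) * (t:ℂ) := by exact_mod_cast congrArg (fun x : ℤ => (x:ℂ)) ht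
  rw [step1, Finset.sum_congr rfl step2, Finset.sum_sub_distrib,
    ← Finset.sum_mul, ← Finset.sum_mul, hP, hQ, hTC]
  push_cast
  field_simp
end

section
/- With φ_{h,d} as above, for h = 1 one has the closed formula φ_{1,d}(s) = (d² - 1 - 6s(d-s))/12 for every integer s with 0 ≤ s ≤ d-1; in particular φ_{1,d}(0) = (d²-1)/12. -/
open Finset

theorem eq_add_mul_of_sub_two_mul_add_eq_zero {K : Type*} [CommRing K] {H : ℕ → K} {d : ℕ}
    (h2 : ∀ n, n + 2 ≤ d → H (n + 2) - 2 * H (n + 1) + H n = 0) :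
    ∀ n ≤ d, H n = H 0 + n * (H 1 - H 0) := by
  intro n
  induction n using Nat.twoStepInduction with
  | zero => simp
  | one => simp
  | more n ih₀ ih₁ =>
    intro hn
    have := h2 n hn
    rw [ih₀ (by omega), ih₁ (by omega)] at this
    push_cast at this ⊢
    linear_combination this

theorem eq_zero_of_sub_two_mul_add_eq_zero {K : Type*} [Field K] [CharZero K] {H : ℕ → K}
    {d : ℕ} (hd : d ≠ 0) (h2 : ∀ n, n + 2 ≤ d → H (n + 2) - 2 * H (n + 1) + H n = 0)
    (hper : H d = H 0) (hsum : ∑ n ∈ range d, H n = 0) : ∀ n ≤ d, H n = 0 := by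
  have hlin := eq_add_mul_of_sub_two_mul_add_eq_zero h2
  have hdK : (d : K) ≠ 0 := Nat.cast_ne_zero.2 hd
  have hslope : H 1 - H 0 = 0 := by
    have := hlin d le_rfl
    rw [hper] at this
    exact (mul_eq_zero.1 (by linear_combination -this)).resolve_left hdK
  have hconst : ∀ n ≤ d, H n = H 0 := fun n hn => by rw [hlin n hn, hslope, mul_zero, add_zero]
  have hH0 : H 0 = 0 := by
    rw [sum_congr rfl fun n hn => hconst n (mem_range.1 hn).le, sum_const, card_range,
      nsmul_eq_mul] at hsum
    exact (mul_eq_zero.1 hsum).resolve_left hdK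
  exact fun n hn => (hconst n hn).trans hH0

section DedekindRootSum

variable {K : Type*} [Field K] {ζ : K} {d : ℕ}

def dedekindRootSum (ζ : K) (d s : ℕ) : K :=
  ∑ k ∈ Ico 1 d, (ζ ^ k) ^ s / ((1 - ζ ^ k) * (1 - (ζ ^ k)⁻¹))

variable (K) in
def dedekindClosedForm (d s : ℕ) : K :=
  ((d : K) ^ 2 - 1 - 6 * s * (d - s)) / 12

theorem IsPrimitiveRoot.geom_sum_pow_eq_zero (hζ : IsPrimitiveRoot ζ d) {m : ℕ}
    (hm : ¬d ∣ m) : ∑ i ∈ range d, (ζ ^ m) ^ i = 0 := by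
  have hne : ζ ^ m ≠ 1 := fun h => hm ((hζ.pow_eq_one_iff_dvd m).1 h)
  rw [geom_sum_eq hne, pow_right_comm, hζ.pow_eq_one, one_pow, sub_self, zero_div]

theorem IsPrimitiveRoot.sum_Ico_pow_pow_eq_neg_one (hζ : IsPrimitiveRoot ζ d) (hd : 0 < d)
    {m : ℕ} (hm : ¬d ∣ m) : ∑ k ∈ Ico 1 d, (ζ ^ k) ^ m = -1 := by
  have := hζ.geom_sum_pow_eq_zero hm
  rw [range_eq_Ico, sum_eq_sum_Ico_succ_bot hd] at this
  simp only [pow_right_comm ζ m] at this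
  linear_combination this

theorem sub_two_mul_add_div_one_sub_mul_one_sub_inv {z : K} (hz₀ : z ≠ 0) (hz₁ : z ≠ 1)
    (n : ℕ) :
    (z ^ (n + 2) - 2 * z ^ (n + 1) + z ^ n) / ((1 - z) * (1 - z⁻¹)) = -z ^ (n + 1) := by
  have : 1 - z ≠ 0 := sub_ne_zero.2 hz₁.symm
  field_simp
  ring

theorem IsPrimitiveRoot.dedekindRootSum_second_diff (hζ : IsPrimitiveRoot ζ d) {n : ℕ}
    (hn : n + 2 ≤ d) :
    dedekindRootSum ζ d (n + 2) - 2 * dedekindRootSum ζ d (n + 1) + dedekindRootSum ζ d n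
      = 1 := by
  have hdvd : ¬d ∣ n + 1 := Nat.not_dvd_of_pos_of_lt n.succ_pos (by omega)
  have hterm : ∀ k ∈ Ico 1 d,
      ((ζ ^ k) ^ (n + 2) - 2 * (ζ ^ k) ^ (n + 1) + (ζ ^ k) ^ n)
        / ((1 - ζ ^ k) * (1 - (ζ ^ k)⁻¹)) = -(ζ ^ k) ^ (n + 1) := fun k hk => by
    have hk := mem_Ico.1 hk
    have hζk : ζ ^ k ≠ 1 := fun h =>
      Nat.not_dvd_of_pos_of_lt hk.1 hk.2 ((hζ.pow_eq_one_iff_dvd k).1 h)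
    exact sub_two_mul_add_div_one_sub_mul_one_sub_inv
      (pow_ne_zero k (hζ.ne_zero (by omega))) hζk n
  calc _ = ∑ k ∈ Ico 1 d, ((ζ ^ k) ^ (n + 2) - 2 * (ζ ^ k) ^ (n + 1) + (ζ ^ k) ^ n)
        / ((1 - ζ ^ k) * (1 - (ζ ^ k)⁻¹)) := by
        simp only [dedekindRootSum, mul_sum, ← sum_sub_distrib, ← sum_add_distrib]
        exact sum_congr rfl fun k _ => by ring
    _ = 1 := by
      rw [sum_congr rfl hterm, sum_neg_distrib, hζ.sum_Ico_pow_pow_eq_neg_one (by omega) hdvd,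
        neg_neg]

theorem IsPrimitiveRoot.dedekindRootSum_self (hζ : IsPrimitiveRoot ζ d) :
    dedekindRootSum ζ d d = dedekindRootSum ζ d 0 := by
  unfold dedekindRootSum
  simp only [pow_right_comm ζ _ d, hζ.pow_eq_one, one_pow, pow_zero]

theorem IsPrimitiveRoot.sum_range_dedekindRootSum (hζ : IsPrimitiveRoot ζ d) :
    ∑ s ∈ range d, dedekindRootSum ζ d s = 0 := by
  simp only [dedekindRootSum]
  rw [sum_comm]
  refine sum_eq_zero fun k hk => ?_
  have hk := mem_Ico.1 hk
  rw [← sum_div, hζ.geom_sum_pow_eq_zero (Nat.not_dvd_of_pos_of_lt hk.1 hk.2), zero_div]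

theorem dedekindClosedForm_second_diff [CharZero K] (n : ℕ) :
    dedekindClosedForm K d (n + 2) - 2 * dedekindClosedForm K d (n + 1)
      + dedekindClosedForm K d n = 1 := by
  simp only [dedekindClosedForm]
  push_cast
  ring

theorem dedekindClosedForm_self : dedekindClosedForm K d d = dedekindClosedForm K d 0 := by
  simp only [dedekindClosedForm]
  push_cast
  ring

theorem sum_range_dedekindClosedForm : ∑ s ∈ range d, dedekindClosedForm K d s = 0 := by
  have h (n : ℕ) : ∑ s ∈ range n, dedekindClosedForm K d s
      = n * ((d ^ 2 - 1) - 3 * d * (n - 1) + (n - 1) * (2 * n - 1)) / 12 := by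
    induction n with
    | zero => simp
    | succ n ih =>
      rw [sum_range_succ, ih, dedekindClosedForm]
      push_cast
      ring
  rw [h]
  ring

theorem IsPrimitiveRoot.dedekindRootSum_eq [CharZero K] (hζ : IsPrimitiveRoot ζ d) (hd : d ≠ 0)
    {s : ℕ} (hs : s ≤ d) : dedekindRootSum ζ d s = dedekindClosedForm K d s := by
  refine sub_eq_zero.1 (eq_zero_of_sub_two_mul_add_eq_zero (H := fun s =>
    dedekindRootSum ζ d s - dedekindClosedForm K d s) hd (fun n hn => ?_) ?_ ?_ s hs)
  · linear_combination
      hζ.dedekindRootSum_second_diff hn - dedekindClosedForm_second_diff (K := K) n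
  · simp only [hζ.dedekindRootSum_self, dedekindClosedForm_self (K := K)]
  · simp only [sum_sub_distrib, hζ.sum_range_dedekindRootSum,
      sum_range_dedekindClosedForm (K := K), sub_zero]

end DedekindRootSum

open Complex in
theorem ee_natCast_div (n d : ℕ) : ee ((n : ℝ) / d) = exp (2 * Real.pi * I / d) ^ n := by
  rw [ee, ← exp_nat_mul]
  push_cast
  ring_nf

theorem ee_neg (x : ℝ) : ee (-x) = (ee x)⁻¹ := by
  rw [ee, ee, ← Complex.exp_neg]
  push_cast
  ring_nf

open Complex in
theorem phi_one_natCast (d n : ℕ) :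
    phi 1 d n = dedekindRootSum (exp (2 * Real.pi * I / d)) d n := by
  refine sum_congr rfl fun k _ => ?_
  have hkn : (k : ℝ) * ((n : ℤ) : ℝ) / d = ((k * n : ℕ) : ℝ) / d := by push_cast; ring
  rw [hkn, Int.cast_one, mul_one, neg_div, ee_neg, ee_natCast_div, ee_natCast_div, pow_mul]

theorem phi_one_closed_form_general (d : ℕ) (s : ℤ) (hs0 : 0 ≤ s) (hsd : s < d) :
    phi 1 d s = ((d : ℂ) ^ 2 - 1 - 6 * (s : ℂ) * ((d : ℂ) - (s : ℂ))) / 12 ∧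
    phi 1 d 0 = ((d : ℂ) ^ 2 - 1) / 12 := by
  lift s to ℕ using hs0
  have hd : d ≠ 0 := by omega
  have hζ := Complex.isPrimitiveRoot_exp d hd
  have hphi {n : ℕ} (hn : n ≤ d) : phi 1 d n = dedekindClosedForm ℂ d n := by
    rw [phi_one_natCast, hζ.dedekindRootSum_eq hd hn]
  constructor
  · rw [hphi (by omega), dedekindClosedForm]
    push_cast
    rfl
  · simpa [dedekindClosedForm] using hphi (Nat.zero_le d)

theorem phi_one_closed_form (d : ℕ) (hd : 1 ≤ d) (s : ℤ) (hs0 : 0 ≤ s) (hsd : s < d) :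
    phi 1 d s = ((d : ℂ) ^ 2 - 1 - 6 * (s : ℂ) * ((d : ℂ) - (s : ℂ))) / 12 ∧
    phi 1 d 0 = ((d : ℂ) ^ 2 - 1) / 12 :=
  phi_one_closed_form_general d s hs0 hsd
end

section
/- φ_{h,d}(s) is invariant under replacing h by its inverse h' modulo d and s by -h'·s: that is, if h·h' ≡ 1 (mod d), then φ_{h',d}(-h's) = φ_{h,d}(s) for every integer s. -/
/-!
Read `φ_{h,d}` as a sum over all of `ZMod d` of a term built from the standard additive
character `ψ`: the residue `0` contributes nothing. The substitution `x ↦ -h x`, a bijection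
of `ZMod d` with inverse `x ↦ -h' x`, turns the term of `φ_{h',d}(-h's)` at `-h x` into that
of `φ_{h,d}(s)` at `x`, the two denominator factors trading places.
-/

open Finset

lemma ee_intCast_div_s10 (d : ℕ) [NeZero d] (j : ℤ) :
    ee ((j : ℝ) / d) = ZMod.stdAddChar (j : ZMod d) := by
  rw [ZMod.stdAddChar_coe, ee]
  push_cast
  ring_nf

lemma ZMod.sum_range_natCast {M : Type*} [AddCommMonoid M] (d : ℕ) [NeZero d]
    (f : ZMod d → M) : ∑ k ∈ range d, f k = ∑ x, f x :=
  sum_nbij' (↑) ZMod.val (by simp) (fun x _ => mem_range.2 (ZMod.val_lt x))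
    (fun k hk => ZMod.val_cast_of_lt (mem_range.1 hk)) (fun x _ => ZMod.natCast_zmod_val x)
    fun _ _ => rfl

section DedekindTerm

variable {R K : Type*} [CommRing R] [Field K] (ψ : AddChar R K)

noncomputable def dedekindTerm (h s x : R) : K :=
  ψ (x * s) / ((1 - ψ (x * h)) * (1 - ψ (-x)))

-- The denominator vanishes at `x = 0`, and division by zero gives `0`.
lemma dedekindTerm_zero (h s : R) : dedekindTerm ψ h s 0 = 0 := by
  simp [dedekindTerm]

lemma dedekindTerm_neg_mul {h h' : R} (hh : h * h' = 1) (s x : R) :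
    dedekindTerm ψ h' (-h' * s) (-h * x) = dedekindTerm ψ h s x := by
  have hs : -h * x * (-h' * s) = x * s := by linear_combination x * s * hh
  have hh' : -h * x * h' = -x := by linear_combination -x * hh
  rw [dedekindTerm, dedekindTerm, hs, hh', neg_mul, neg_neg, mul_comm h x,
    mul_comm (1 - ψ (-x))]

lemma sum_dedekindTerm_of_mul_eq_one [Fintype R] {h h' : R} (hh : h * h' = 1) (s : R) :
    ∑ x, dedekindTerm ψ h' (-h' * s) x = ∑ x, dedekindTerm ψ h s x := by
  have hh' : h' * h = 1 := by rwa [mul_comm]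
  refine (Fintype.sum_equiv ⟨(-h * ·), (-h' * ·), fun x => ?_, fun x => ?_⟩ _ _
    fun x => (dedekindTerm_neg_mul ψ hh s x).symm).symm
  · linear_combination x * hh
  · linear_combination x * hh'

end DedekindTerm

lemma phi_eq_sum_dedekindTerm (h : ℤ) (d : ℕ) [NeZero d] (s : ℤ) :
    phi h d s = ∑ x, dedekindTerm ZMod.stdAddChar (h : ZMod d) (s : ZMod d) x := by
  have hterm (k : ℕ) : ee ((k : ℝ) * (s : ℝ) / d) /
      ((1 - ee ((k : ℝ) * (h : ℝ) / d)) * (1 - ee (-(k : ℝ) / d))) =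
      dedekindTerm ZMod.stdAddChar (h : ZMod d) (s : ZMod d) (k : ZMod d) := by
    have hks := ee_intCast_div_s10 d (k * s)
    have hkh := ee_intCast_div_s10 d (k * h)
    have hk := ee_intCast_div_s10 d (-k)
    push_cast at hks hkh hk
    rw [hks, hkh, hk, dedekindTerm]
  rw [phi, ← ZMod.sum_range_natCast, range_eq_Ico,
    sum_eq_sum_Ico_succ_bot (Nat.pos_of_neZero d), Nat.cast_zero, dedekindTerm_zero, zero_add]
  exact sum_congr rfl fun k _ => hterm k

theorem phi_inverse_invariance (d : ℕ) (hd : 1 ≤ d) (h h' : ℤ)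
    (hinv : h * h' ≡ 1 [ZMOD (d : ℤ)]) (s : ℤ) :
    phi h' d (-h' * s) = phi h d s := by
  have : NeZero d := ⟨by omega⟩
  have hunit : (h : ZMod d) * h' = 1 := by
    exact_mod_cast (ZMod.intCast_eq_intCast_iff _ _ d).mpr hinv
  rw [phi_eq_sum_dedekindTerm, phi_eq_sum_dedekindTerm, Int.cast_mul, Int.cast_neg]
  exact sum_dedekindTerm_of_mul_eq_one _ hunit _
end

section
/- φ_{h,d}(0) = d·s(h,d) + (d-1)/4, where s(h,d) = ∑_{u=1}^{d-1} ((u/d))·((hu/d)) is the classical Dedekind sum with ((x)) = x - ⌊x⌋ - 1/2 for x ∉ ℤ and ((x)) = 0 for x ∈ ℤ. -/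
/-- The sawtooth function `((x))`: `0` for integer `x`, and `x - ⌊x⌋ - 1/2` otherwise. -/
noncomputable def saw (x : ℝ) : ℝ := if Int.fract x = 0 then 0 else Int.fract x - 1 / 2

/-- The classical Dedekind sum `s(h,d) = ∑_{u=1}^{d-1} ((u/d)) ((hu/d))`. -/
noncomputable def dedekindSum (h : ℤ) (d : ℕ) : ℝ :=
  ∑ u ∈ Finset.Ico 1 d, saw ((u : ℝ) / d) * saw ((h : ℝ) * u / d)

open Finset Complex

lemma aux_sum_mul_pow (n : ℕ) (x : ℂ) :
    (1 - x) * ∑ u ∈ range n, (u : ℂ) * x ^ u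
      = (∑ u ∈ range n, x ^ u) - 1 - ((n : ℂ) - 1) * x ^ n := by
  induction n with
  | zero => simp
  | succ n ih =>
    rw [Finset.sum_range_succ, Finset.sum_range_succ (f := fun u => x ^ u), mul_add, ih]
    push_cast
    ring

lemma aux_root_sum (d : ℕ) (x : ℂ) (h1 : x ^ d = 1) (hx : x ≠ 1) :
    (1 - x) * ∑ u ∈ range d, (u : ℂ) * x ^ u = -d := by
  rw [aux_sum_mul_pow, geom_sum_eq hx, h1]
  simp
  ring

lemma aux_geom_sum_root (d : ℕ) (w : ℂ) (h1 : w ^ d = 1) :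
    ∑ k ∈ range d, w ^ k = if w = 1 then (d : ℂ) else 0 := by
  split_ifs with hw
  · simp [hw]
  · rw [geom_sum_eq hw, h1]; simp

theorem phi_zero_eq_dedekind (d : ℕ) (hd : 1 ≤ d) (h : ℤ) (hcop : Int.gcd h d = 1) :
    phi h d 0 = (((d : ℝ) * dedekindSum h d + ((d : ℝ) - 1) / 4 : ℝ) : ℂ) := by
  rcases eq_or_lt_of_le hd with hd1 | hd2
  · simp [phi, dedekindSum, ← hd1]
  have hd0 : 0 < d := by omega
  have hdR : (0 : ℝ) < d := by exact_mod_cast hd0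
  have hdC : (d : ℂ) ≠ 0 := by exact_mod_cast hdR.ne'
  set ζ : ℂ := ee (1 / d) with hζdef
  have hζexp : ζ = Complex.exp (2 * Real.pi * Complex.I / d) := by
    rw [hζdef, ee]
    push_cast
    ring_nf
  have hprim : IsPrimitiveRoot ζ d := by
    rw [hζexp]; exact Complex.isPrimitiveRoot_exp d (by omega)
  have hζ0 : ζ ≠ 0 := by rw [hζexp]; exact Complex.exp_ne_zero _
  have hee : ∀ m : ℤ, ee ((m : ℝ) / d) = ζ ^ m := by
    intro m
    rw [hζdef, ee, ee, ← Complex.exp_int_mul]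
    congr 1
    push_cast
    ring
  have hone : ∀ m : ℤ, ζ ^ m = 1 ↔ (d : ℤ) ∣ m := fun m => hprim.zpow_eq_one_iff_dvd m
  have hcd : IsCoprime (d : ℤ) h := (Int.isCoprime_iff_gcd_eq_one.mpr hcop).symm
  have hdvd : ∀ m : ℤ, (d : ℤ) ∣ h * m → (d : ℤ) ∣ m := fun m hm =>
    hcd.dvd_of_dvd_mul_left hm
  have hndvd : ∀ k ∈ Finset.Ico 1 d, ¬ (d : ℤ) ∣ (k : ℤ) := by
    intro k hk hdk
    rw [Finset.mem_Ico] at hk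
    have h1 : (d : ℤ) ≤ (k : ℤ) := Int.le_of_dvd (by exact_mod_cast hk.1) hdk
    omega
  -- residues
  set r : ℕ → ℤ := fun u => (h * u) % d with hrdef
  have hr0 : ∀ u : ℕ, 0 ≤ r u := fun u => Int.emod_nonneg _ (by exact_mod_cast hd0.ne')
  have hrlt : ∀ u : ℕ, r u < d := fun u => Int.emod_lt_of_pos _ (by exact_mod_cast hd0)
  have hrne : ∀ u ∈ Finset.Ico 1 d, r u ≠ 0 := by
    intro u hu hru
    exact hndvd u hu (hdvd u (Int.dvd_of_emod_eq_zero hru))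
  have hx1 : ∀ a : ℤ, (ζ ^ a) ^ d = 1 := by
    intro a
    rw [← zpow_natCast (ζ ^ a), ← zpow_mul, mul_comm, zpow_mul, zpow_natCast,
      hprim.pow_eq_one, one_zpow]
  have hxne : ∀ a : ℤ, ¬ (d : ℤ) ∣ a → (ζ ^ a) ≠ 1 := fun a ha e => ha ((hone a).mp e)
  -- step 1 : expand each reciprocal
  have step1 : phi h d 0 = ∑ k ∈ Finset.Ico 1 d,
      (∑ u ∈ range d, (u : ℂ) * (ζ ^ ((k : ℤ) * h)) ^ u) *
        (∑ v ∈ range d, (v : ℂ) * (ζ ^ (-(k : ℤ))) ^ v) / (d : ℂ) ^ 2 := by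
    unfold phi
    refine Finset.sum_congr rfl ?_
    intro k hk
    have e0 : ee ((k : ℝ) * ((0 : ℤ) : ℝ) / d) = 1 := by
      norm_num [ee]
    have e1 : ee ((k : ℝ) * (h : ℝ) / d) = ζ ^ ((k : ℤ) * h) := by
      rw [← hee]; congr 1; push_cast; ring
    have e2 : ee (-(k : ℝ) / d) = ζ ^ (-(k : ℤ)) := by
      rw [← hee]; congr 1; push_cast; ring
    rw [e0, e1, e2]
    have hxa : ¬ (d : ℤ) ∣ (k : ℤ) * h := by
      intro hh
      exact hndvd k hk (hdvd k (by rwa [mul_comm] at hh))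
    have hxb : ¬ (d : ℤ) ∣ (-(k : ℤ)) := fun hh => hndvd k hk (dvd_neg.mp hh)
    have hSx := aux_root_sum d (ζ ^ ((k : ℤ) * h)) (hx1 _) (hxne _ hxa)
    have hSy := aux_root_sum d (ζ ^ (-(k : ℤ))) (hx1 _) (hxne _ hxb)
    set Sx := ∑ u ∈ range d, (u : ℂ) * (ζ ^ ((k : ℤ) * h)) ^ u with hSxdef
    set Sy := ∑ v ∈ range d, (v : ℂ) * (ζ ^ (-(k : ℤ))) ^ v with hSydef
    have hx0 : (1 - ζ ^ ((k : ℤ) * h)) ≠ 0 := by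
      intro e; rw [e, zero_mul] at hSx
      exact hdC (neg_eq_zero.mp hSx.symm)
    have hy0 : (1 - ζ ^ (-(k : ℤ))) ≠ 0 := by
      intro e; rw [e, zero_mul] at hSy
      exact hdC (neg_eq_zero.mp hSy.symm)
    rw [div_eq_div_iff (mul_ne_zero hx0 hy0) (pow_ne_zero 2 hdC)]
    linear_combination (-(1 - ζ ^ (-(k : ℤ))) * Sy) * hSx + (d : ℂ) * hSy
  -- k-sum of roots of unity
  have hksum : ∀ m : ℤ, ∑ k ∈ Finset.Ico 1 d, ζ ^ ((k : ℤ) * m)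
      = (if (d : ℤ) ∣ m then (d : ℂ) else 0) - 1 := by
    intro m
    have hw : ∀ k : ℕ, ζ ^ ((k : ℤ) * m) = (ζ ^ m) ^ k := by
      intro k; rw [mul_comm, zpow_mul, zpow_natCast]
    simp_rw [hw]
    have hrange : ∑ k ∈ range d, (ζ ^ m) ^ k
        = (ζ ^ m) ^ 0 + ∑ k ∈ Finset.Ico 1 d, (ζ ^ m) ^ k := by
      rw [Finset.range_eq_Ico, Finset.sum_eq_sum_Ico_succ_bot hd0]
    have hgs := aux_geom_sum_root d (ζ ^ m) (hx1 m)
    rw [hrange, pow_zero] at hgs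
    by_cases hm : (d : ℤ) ∣ m
    · rw [if_pos hm]; rw [if_pos ((hone m).mpr hm)] at hgs; linear_combination hgs
    · rw [if_neg hm]; rw [if_neg (fun e => hm ((hone m).mp e))] at hgs
      linear_combination hgs
  -- step 2 : full triple sum
  have step2 : phi h d 0 = (∑ u ∈ range d, ∑ v ∈ range d,
      (u : ℂ) * (v : ℂ) * ((if (d : ℤ) ∣ (h * u - v) then (d : ℂ) else 0) - 1)) / (d : ℂ) ^ 2 := by
    rw [step1, ← Finset.sum_div]
    congr 1
    have expand : ∀ k ∈ Finset.Ico 1 d,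
        (∑ u ∈ range d, (u : ℂ) * (ζ ^ ((k : ℤ) * h)) ^ u) *
          (∑ v ∈ range d, (v : ℂ) * (ζ ^ (-(k : ℤ))) ^ v)
        = ∑ u ∈ range d, ∑ v ∈ range d,
            (u : ℂ) * (v : ℂ) * ζ ^ ((k : ℤ) * (h * u - v)) := by
      intro k _
      rw [Finset.sum_mul_sum]
      refine Finset.sum_congr rfl fun u _ => Finset.sum_congr rfl fun v _ => ?_
      rw [← zpow_natCast (ζ ^ ((k : ℤ) * h)) u, ← zpow_mul,
        ← zpow_natCast (ζ ^ (-(k : ℤ))) v, ← zpow_mul]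
      rw [mul_mul_mul_comm, ← zpow_add₀ hζ0]
      congr 1
      ring
    rw [Finset.sum_congr rfl expand, Finset.sum_comm]
    refine Finset.sum_congr rfl fun u _ => ?_
    rw [Finset.sum_comm]
    refine Finset.sum_congr rfl fun v _ => ?_
    rw [← Finset.mul_sum, hksum]
  -- inner v-sum picks out the residue
  have hvsum : ∀ u : ℕ, ∑ v ∈ range d,
      (v : ℂ) * (if (d : ℤ) ∣ (h * u - v) then (d : ℂ) else 0) = (d : ℂ) * ((r u : ℤ) : ℂ) := by
    intro u
    rw [Finset.sum_eq_single_of_mem ((r u).toNat)]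
    · have hc : (d : ℤ) ∣ (h * u - ((r u).toNat : ℤ)) := by
        rw [Int.toNat_of_nonneg (hr0 u)]
        exact Int.dvd_self_sub_of_emod_eq rfl
      rw [if_pos hc]
      have h1 : ((r u).toNat : ℤ) = r u := Int.toNat_of_nonneg (hr0 u)
      have h2 : (((r u).toNat : ℕ) : ℂ) = ((r u : ℤ) : ℂ) := by
        rw [← h1]; norm_cast
      rw [h2]; ring
    · refine Finset.mem_range.mpr ?_
      have := hrlt u; have := hr0 u; omega
    · intro b hb hbne
      rw [if_neg, mul_zero]
      intro hdvd'
      have hbd : ((b : ℤ)) % (d : ℤ) = (b : ℤ) := by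
        rw [Int.emod_eq_of_lt (by positivity) (by exact_mod_cast Finset.mem_range.mp hb)]
      have : (h * (u : ℤ)) % d = (b : ℤ) % d :=
        (Int.emod_eq_emod_iff_emod_sub_eq_zero).mpr (Int.emod_eq_zero_of_dvd hdvd')
      rw [hbd] at this
      apply hbne
      have : (r u) = (b : ℤ) := this
      omega
  -- assemble complex side
  have key : phi h d 0 = (∑ u ∈ range d, (u : ℂ) * ((r u : ℤ) : ℂ)) / d
      - (∑ u ∈ range d, (u : ℂ)) ^ 2 / (d : ℂ) ^ 2 := by
    rw [step2]
    have hrow : ∀ u ∈ range d, ∑ v ∈ range d,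
        (u : ℂ) * (v : ℂ) * ((if (d : ℤ) ∣ (h * u - v) then (d : ℂ) else 0) - 1)
        = (u : ℂ) * ((d : ℂ) * ((r u : ℤ) : ℂ)) - (u : ℂ) * ∑ v ∈ range d, (v : ℂ) := by
      intro u _
      have e : ∀ v : ℕ, (u : ℂ) * (v : ℂ) * ((if (d : ℤ) ∣ (h * u - v) then (d : ℂ) else 0) - 1)
          = (u : ℂ) * ((v : ℂ) * (if (d : ℤ) ∣ (h * u - v) then (d : ℂ) else 0))
            - (u : ℂ) * (v : ℂ) := by
        intro v; ring
      simp_rw [e]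
      rw [Finset.sum_sub_distrib, ← Finset.mul_sum, ← Finset.mul_sum, hvsum]
    rw [Finset.sum_congr rfl hrow, Finset.sum_sub_distrib]
    have e1 : ∀ u : ℕ, (u : ℂ) * ((d : ℂ) * ((r u : ℤ) : ℂ))
        = (d : ℂ) * ((u : ℂ) * ((r u : ℤ) : ℂ)) := fun u => by ring
    simp_rw [e1]
    rw [← Finset.mul_sum, ← Finset.sum_mul]
    field_simp
  -- real facts
  have hneg : ∀ a : ℤ, ¬ (d : ℤ) ∣ a → (-a) % d = d - a % d := by
    intro a ha
    have h1 : 0 ≤ a % d := Int.emod_nonneg a (by exact_mod_cast hd0.ne')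
    have h2 : a % d < d := Int.emod_lt_of_pos a (by exact_mod_cast hd0)
    have h3 : a % d ≠ 0 := fun e => ha (Int.dvd_of_emod_eq_zero e)
    have hmod : ((d : ℤ) - a % d) % d = d - a % d := Int.emod_eq_of_lt (by omega) (by omega)
    rw [← hmod]
    apply Int.emod_eq_emod_iff_emod_sub_eq_zero.mpr
    have he : -a - ((d : ℤ) - a % d) = -(a - a % d) - d := by ring
    rw [he]
    apply Int.emod_eq_zero_of_dvd
    exact dvd_sub (dvd_neg.mpr (Int.dvd_self_sub_of_emod_eq rfl)) dvd_rfl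
  have hrrefl : ∀ u ∈ Finset.Ico 1 d, r (d - u) = d - r u := by
    intro u hu
    have hu' := Finset.mem_Ico.mp hu
    have hcast : ((d - u : ℕ) : ℤ) = (d : ℤ) - u := by omega
    have hnd : ¬ (d : ℤ) ∣ h * u := fun e => hndvd u hu (hdvd u e)
    simp only [hrdef]
    calc (h * ((d - u : ℕ) : ℤ)) % d = (-(h * u) + (d : ℤ) * h) % d := by
          rw [hcast]; congr 1; ring
      _ = (-(h * (u : ℤ))) % d := by rw [Int.add_mul_emod_self_left]
      _ = (d : ℤ) - (h * u) % d := hneg _ hnd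
  have hsumuIco : ∑ u ∈ Finset.Ico 1 d, (u : ℝ) = d * (d - 1) / 2 := by
    have h0 : ∑ u ∈ range d, (u : ℝ) = ∑ u ∈ Finset.Ico 1 d, (u : ℝ) := by
      rw [Finset.range_eq_Ico, Finset.sum_eq_sum_Ico_succ_bot hd0]
      simp
    have h1 := Finset.sum_range_id_mul_two d
    have h2 := congrArg (Nat.cast : ℕ → ℝ) h1
    push_cast [Nat.cast_sub hd] at h2
    rw [← h0]
    linarith
  have hsumr : ∑ u ∈ Finset.Ico 1 d, ((r u : ℤ) : ℝ) = d * (d - 1) / 2 := by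
    have hrefl : ∑ u ∈ Finset.Ico 1 d, ((r u : ℤ) : ℝ)
        = ∑ u ∈ Finset.Ico 1 d, ((r (d - u) : ℤ) : ℝ) := by
      refine Finset.sum_nbij' (fun u => d - u) (fun u => d - u) ?_ ?_ ?_ ?_ ?_
      · intro a ha; rw [Finset.mem_Ico] at *; omega
      · intro a ha; rw [Finset.mem_Ico] at *; omega
      · intro a ha; rw [Finset.mem_Ico] at ha; omega
      · intro a ha; rw [Finset.mem_Ico] at ha; omega
      · intro a ha
        rw [Finset.mem_Ico] at ha
        congr 2
        omega
    have h2 : ∑ u ∈ Finset.Ico 1 d, ((r (d - u) : ℤ) : ℝ)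
        = ∑ u ∈ Finset.Ico 1 d, ((d : ℝ) - ((r u : ℤ) : ℝ)) := by
      refine Finset.sum_congr rfl fun u hu => ?_
      rw [hrrefl u hu]
      push_cast
      ring
    rw [h2, Finset.sum_sub_distrib, Finset.sum_const, Nat.card_Ico] at hrefl
    have hcard : (((d - 1 : ℕ)) : ℝ) = (d : ℝ) - 1 := by push_cast [Nat.cast_sub hd]; ring
    rw [nsmul_eq_mul, hcard] at hrefl
    linarith
  -- sawtooth values
  have hfract : ∀ m : ℤ, Int.fract ((m : ℝ) / d) = ((m % d : ℤ) : ℝ) / d := by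
    intro m
    have hdm : (d : ℤ) * (m / d) + m % d = m := Int.mul_ediv_add_emod m d
    have hdm' : ((m : ℝ)) = (d : ℝ) * ((m / d : ℤ) : ℝ) + ((m % d : ℤ) : ℝ) := by
      exact_mod_cast hdm.symm
    have hsplit : ((m : ℝ)) / d = ((m / d : ℤ) : ℝ) + ((m % d : ℤ) : ℝ) / d := by
      rw [hdm']; field_simp
    rw [hsplit, Int.fract_intCast_add, Int.fract_eq_self.mpr]
    constructor
    · exact div_nonneg (by exact_mod_cast Int.emod_nonneg m (by exact_mod_cast hd0.ne')) hdR.le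
    · rw [div_lt_one hdR]
      exact_mod_cast Int.emod_lt_of_pos m (by exact_mod_cast hd0)
  have hsawu : ∀ u ∈ Finset.Ico 1 d, saw ((u : ℝ) / d) = (u : ℝ) / d - 1 / 2 := by
    intro u hu
    have hu' := Finset.mem_Ico.mp hu
    have hfr : Int.fract ((u : ℝ) / d) = (u : ℝ) / d := by
      rw [Int.fract_eq_self]
      constructor
      · positivity
      · rw [div_lt_one hdR]; exact_mod_cast hu'.2
    unfold saw
    rw [hfr, if_neg]
    intro e
    rw [div_eq_zero_iff] at e
    have hu1 : (0 : ℝ) < u := by exact_mod_cast hu'.1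
    rcases e with e | e
    · linarith
    · exact hdR.ne' e
  have hsawhu : ∀ u ∈ Finset.Ico 1 d, saw ((h : ℝ) * u / d) = ((r u : ℤ) : ℝ) / d - 1 / 2 := by
    intro u hu
    have harg : (h : ℝ) * u / d = (((h * u : ℤ)) : ℝ) / d := by push_cast; ring
    unfold saw
    rw [harg, hfract (h * u)]
    rw [if_neg]
    intro e
    rw [div_eq_zero_iff] at e
    have hne := hrne u hu
    simp only [hrdef] at hne
    rcases e with e | e
    · exact hne (by exact_mod_cast e)
    · exact hdR.ne' e
  -- real identity
  have hreal : (∑ u ∈ Finset.Ico 1 d, (u : ℝ) * ((r u : ℤ) : ℝ)) / d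
      - (d * (d - 1) / 2) ^ 2 / (d : ℝ) ^ 2
      = d * dedekindSum h d + ((d : ℝ) - 1) / 4 := by
    unfold dedekindSum
    have hsum_eq : ∑ u ∈ Finset.Ico 1 d, saw ((u : ℝ) / d) * saw ((h : ℝ) * u / d)
        = ∑ u ∈ Finset.Ico 1 d, ((u : ℝ) / d - 1 / 2) * (((r u : ℤ) : ℝ) / d - 1 / 2) :=
      Finset.sum_congr rfl (fun u hu => by rw [hsawu u hu, hsawhu u hu])
    rw [hsum_eq]
    have expand : ∀ u ∈ Finset.Ico 1 d, ((u : ℝ) / d - 1 / 2) * (((r u : ℤ) : ℝ) / d - 1 / 2)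
        = (u : ℝ) * ((r u : ℤ) : ℝ) * (1 / d ^ 2) - (u : ℝ) * (1 / (2 * d))
          - ((r u : ℤ) : ℝ) * (1 / (2 * d)) + 1 / 4 := by
      intro u _
      field_simp
      ring
    rw [Finset.sum_congr rfl expand]
    rw [Finset.sum_add_distrib, Finset.sum_sub_distrib, Finset.sum_sub_distrib,
      ← Finset.sum_mul, ← Finset.sum_mul, ← Finset.sum_mul, Finset.sum_const, Nat.card_Ico,
      hsumr, hsumuIco]
    have hcard : (((d - 1 : ℕ)) : ℝ) = (d : ℝ) - 1 := by push_cast [Nat.cast_sub hd]; ring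
    rw [nsmul_eq_mul, hcard]
    field_simp
    ring
  -- conclude
  have hRIco : ∑ u ∈ range d, (u : ℝ) * ((r u : ℤ) : ℝ)
      = ∑ u ∈ Finset.Ico 1 d, (u : ℝ) * ((r u : ℤ) : ℝ) := by
    rw [Finset.range_eq_Ico, Finset.sum_eq_sum_Ico_succ_bot hd0]
    simp
  have hc1 : (∑ u ∈ range d, (u : ℂ) * ((r u : ℤ) : ℂ))
      = (((∑ u ∈ Finset.Ico 1 d, (u : ℝ) * ((r u : ℤ) : ℝ)) : ℝ) : ℂ) := by
    rw [← hRIco, Complex.ofReal_sum]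
    refine Finset.sum_congr rfl fun u _ => ?_
    push_cast
    ring
  have hc2 : (∑ u ∈ range d, (u : ℂ)) = (((d : ℝ) * ((d : ℝ) - 1) / 2 : ℝ) : ℂ) := by
    have h0 : ∑ u ∈ range d, (u : ℂ) = ∑ u ∈ Finset.Ico 1 d, (u : ℂ) := by
      rw [Finset.range_eq_Ico, Finset.sum_eq_sum_Ico_succ_bot hd0]
      simp
    have h1 : ∑ u ∈ Finset.Ico 1 d, (u : ℂ) = (((∑ u ∈ Finset.Ico 1 d, (u : ℝ)) : ℝ) : ℂ) := by
      rw [Complex.ofReal_sum]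
      refine Finset.sum_congr rfl fun u _ => ?_
      push_cast
      rfl
    rw [h0, h1, hsumuIco]
  rw [key, hc1, hc2, ← hreal]
  push_cast
  ring
end

section
/- Let d ≥ 1 and e ≥ 1 be integers, and let f₀, f₁ be polynomials over ℂ of degrees e+d and e+d-1 respectively. There exist polynomials f_l for 2 ≤ l ≤ d, with deg f_l ≤ d+e-l, such that the two-variable polynomial ∑_{l=0}^{d} f_l(w)(z-w)^l has degree at most e in w, if and only if the leading coefficient of f₁ equals d times the leading coefficient of f₀. -/
open Polynomial Finset

noncomputable section

namespace PolyExistAux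

abbrev A : Type := Polynomial (Polynomial ℂ)

def hadd : Polynomial ℂ →+* A := eval₂RingHom (C.comp C) (C X + X)
def hsub : Polynomial ℂ →+* A := eval₂RingHom (C.comp C) (C X - X)
def Phi : A →+* A := eval₂RingHom hadd X
def Psi : A →+* A := eval₂RingHom hsub X

@[simp] lemma hadd_C (a : ℂ) : hadd (C a) = C (C a) := eval₂_C _ _
@[simp] lemma hadd_X : hadd X = C X + X := eval₂_X _ _
@[simp] lemma hsub_C (a : ℂ) : hsub (C a) = C (C a) := eval₂_C _ _
@[simp] lemma hsub_X : hsub X = C X - X := eval₂_X _ _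
@[simp] lemma Phi_C (p : Polynomial ℂ) : Phi (C p) = hadd p := eval₂_C _ _
@[simp] lemma Phi_X : Phi X = X := eval₂_X _ _
@[simp] lemma Psi_C (p : Polynomial ℂ) : Psi (C p) = hsub p := eval₂_C _ _
@[simp] lemma Psi_X : Psi X = X := eval₂_X _ _

lemma Phi_apply (q : A) : Phi q = eval₂ hadd X q := rfl
lemma Psi_apply (q : A) : Psi q = eval₂ hsub X q := rfl

lemma Phi_mapC (p : Polynomial ℂ) : Phi (p.map C) = p.map C := by
  induction p using Polynomial.induction_on' with
  | add p q hp hq => rw [Polynomial.map_add, map_add, hp, hq]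
  | monomial n a =>
    rw [Polynomial.map_monomial, ← C_mul_X_pow_eq_monomial, map_mul, map_pow, Phi_C, Phi_X,
      hadd_C]

lemma Psi_mapC (p : Polynomial ℂ) : Psi (p.map C) = p.map C := by
  induction p using Polynomial.induction_on' with
  | add p q hp hq => rw [Polynomial.map_add, map_add, hp, hq]
  | monomial n a =>
    rw [Polynomial.map_monomial, ← C_mul_X_pow_eq_monomial, map_mul, map_pow, Psi_C, Psi_X,
      hsub_C]

lemma Phi_CX_sub_X : Phi (C X - X) = C X := by
  rw [map_sub, Phi_C, Phi_X, hadd_X]; ring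

lemma Psi_CX : Psi (C X) = C X - X := by rw [Psi_C, hsub_X]

lemma Phi_bigSum (d : ℕ) (f : ℕ → Polynomial ℂ) :
    Phi (∑ l ∈ range (d + 1), ((f l).map (C : ℂ →+* Polynomial ℂ)) * (C X - X) ^ l)
      = ∑ l ∈ range (d + 1), ((f l).map (C : ℂ →+* Polynomial ℂ)) * (C X) ^ l := by
  rw [map_sum]
  refine Finset.sum_congr rfl fun l _ => ?_
  rw [map_mul, map_pow, Phi_mapC, Phi_CX_sub_X]

lemma Psi_bigSum (d : ℕ) (f : ℕ → Polynomial ℂ) :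
    Psi (∑ l ∈ range (d + 1), ((f l).map (C : ℂ →+* Polynomial ℂ)) * (C X) ^ l)
      = ∑ l ∈ range (d + 1), ((f l).map (C : ℂ →+* Polynomial ℂ)) * (C X - X) ^ l := by
  rw [map_sum]
  refine Finset.sum_congr rfl fun l _ => ?_
  rw [map_mul, map_pow, Psi_mapC, Psi_CX]

lemma Psi_hadd (p : Polynomial ℂ) : Psi (hadd p) = C p := by
  have h : Psi.comp hadd = (C : Polynomial ℂ →+* A) := by
    apply Polynomial.ringHom_ext
    · intro a
      simp
    · simp
  exact RingHom.congr_fun h p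

lemma PsiPhi (q : A) : Psi (Phi q) = q := by
  have h : Psi.comp Phi = RingHom.id A := by
    apply Polynomial.ringHom_ext
    · intro a
      simp [Psi_hadd]
    · simp
  exact RingHom.congr_fun h q

lemma coeff_eval₂_X (ρ : Polynomial ℂ →+* A) (q : A) (n : ℕ) :
    (eval₂ ρ X q).coeff n = ∑ m ∈ range (n + 1), (ρ (q.coeff m)).coeff (n - m) := by
  classical
  set F : ℕ → Polynomial ℂ := fun i => if i ≤ n then (ρ (q.coeff i)).coeff (n - i) else 0 with hF
  have hz1 : ∀ i, q.natDegree < i → F i = 0 := by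
    intro i hi
    simp [hF, coeff_eq_zero_of_natDegree_lt hi]
  have hz2 : ∀ i, n < i → F i = 0 := by
    intro i hi
    simp [hF, Nat.not_le.mpr hi]
  have hL : (eval₂ ρ X q).coeff n = ∑ i ∈ range (q.natDegree + 1), F i := by
    rw [eval₂_eq_sum_range, finset_sum_coeff]
    exact Finset.sum_congr rfl fun i _ => by rw [coeff_mul_X_pow', hF]
  have hR : ∑ m ∈ range (n + 1), (ρ (q.coeff m)).coeff (n - m) = ∑ i ∈ range (n + 1), F i := by
    refine Finset.sum_congr rfl fun i hi => ?_
    rw [hF]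
    simp [Nat.lt_succ_iff.mp (mem_range.mp hi)]
  have hM1 : ∑ i ∈ range (q.natDegree + 1), F i
      = ∑ i ∈ range (max (q.natDegree + 1) (n + 1)), F i := by
    refine Finset.sum_subset (Finset.range_subset_range.2 (le_max_left _ _)) ?_
    intro i _ hi
    exact hz1 i (by simp only [mem_range, not_lt] at hi; omega)
  have hM2 : ∑ i ∈ range (n + 1), F i = ∑ i ∈ range (max (q.natDegree + 1) (n + 1)), F i := by
    refine Finset.sum_subset (Finset.range_subset_range.2 (le_max_right _ _)) ?_
    intro i _ hi
    exact hz2 i (by simp only [mem_range, not_lt] at hi; omega)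
  rw [hL, hR, hM1, hM2]

lemma coeff_coeff_hadd (p : Polynomial ℂ) (a r : ℕ) :
    ((hadd p).coeff a).coeff r = ((a + r).choose a : ℂ) * p.coeff (a + r) := by
  induction p using Polynomial.induction_on' with
  | add p q hp hq => rw [map_add, coeff_add, coeff_add, hp, hq, coeff_add]; ring
  | monomial i t =>
    rw [← C_mul_X_pow_eq_monomial, map_mul, map_pow, hadd_C, hadd_X, coeff_C_mul,
      add_comm (C (X : Polynomial ℂ)) X, coeff_X_add_C_pow, coeff_C_mul, coeff_C_mul,
      coeff_mul_natCast, coeff_X_pow, coeff_X_pow]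
    by_cases h : a + r = i
    · rw [if_pos h, if_pos (by omega : r = i - a), ← h]
      ring
    · rw [if_neg h, mul_zero, mul_zero]
      by_cases h2 : r = i - a
      · have hia : i < a := by omega
        rw [if_pos h2, Nat.choose_eq_zero_of_lt hia]
        simp
      · rw [if_neg h2]
        ring

lemma CX_sub_X_pow_coeff (i a : ℕ) :
    ((C X - X : A) ^ i).coeff a
      = C ((-1:ℂ)^i * (-1:ℂ)^(i-a) * (i.choose a : ℂ)) * X^(i-a) := by
  have h1 : (C X - X : A) = -(X + C (-X)) := by rw [map_neg]; ring
  have h2 : ((-1 : A) ^ i) = C (C ((-1 : ℂ)^i)) := by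
    rw [map_pow, map_pow]; norm_num
  have h3 : ((-1 : Polynomial ℂ) ^ (i - a)) = C ((-1:ℂ)^(i-a)) := by
    rw [map_pow]; norm_num
  rw [h1, neg_pow (X + C (-X) : A) i, h2, coeff_C_mul, coeff_X_add_C_pow,
    neg_pow (X : Polynomial ℂ) (i - a), h3]
  rw [← Polynomial.C_eq_natCast, map_mul, map_mul]
  ring

lemma coeff_coeff_hsub (p : Polynomial ℂ) (a r : ℕ) :
    ((hsub p).coeff a).coeff r = (-1:ℂ)^a * ((a + r).choose a : ℂ) * p.coeff (a + r) := by
  induction p using Polynomial.induction_on' with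
  | add p q hp hq => rw [map_add, coeff_add, coeff_add, hp, hq, coeff_add]; ring
  | monomial i t =>
    rw [← C_mul_X_pow_eq_monomial, map_mul, map_pow, hsub_C, hsub_X, coeff_C_mul,
      CX_sub_X_pow_coeff, coeff_C_mul, coeff_C_mul, coeff_X_pow, coeff_C_mul, coeff_X_pow]
    by_cases h : a + r = i
    · rw [if_pos (by omega : r = i - a), if_pos h, ← h, Nat.add_sub_cancel_left]
      have hsgn : (-1:ℂ)^(a+r) * (-1:ℂ)^r = (-1:ℂ)^a := by
        rw [← pow_add, show a + r + r = a + 2*r from by ring, pow_add, pow_mul]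
        norm_num
      rw [← hsgn]; ring
    · have hR : (if a + r = i then (1:ℂ) else 0) = 0 := if_neg h
      rw [hR, mul_zero, mul_zero]
      by_cases h2 : r = i - a
      · have hia : i < a := by omega
        rw [if_pos h2, Nat.choose_eq_zero_of_lt hia]
        simp
      · rw [if_neg h2]
        ring

lemma coeff_coeff_Phi (q : A) (n r : ℕ) :
    ((Phi q).coeff n).coeff r
      = ∑ m ∈ range (n + 1), ((n - m + r).choose (n - m) : ℂ) * (q.coeff m).coeff (n - m + r) := by
  rw [Phi_apply, coeff_eval₂_X, finset_sum_coeff]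
  exact Finset.sum_congr rfl fun m _ => coeff_coeff_hadd _ _ _

lemma coeff_coeff_Psi (q : A) (n r : ℕ) :
    ((Psi q).coeff n).coeff r
      = ∑ m ∈ range (n + 1),
          (-1:ℂ)^(n-m) * ((n - m + r).choose (n - m) : ℂ) * (q.coeff m).coeff (n - m + r) := by
  rw [Psi_apply, coeff_eval₂_X, finset_sum_coeff]
  exact Finset.sum_congr rfl fun m _ => coeff_coeff_hsub _ _ _


lemma coeff_sum_C_X_pow {R : Type*} [Semiring R] (g : ℕ → R) (n j : ℕ) :
    (∑ m ∈ range (n + 1), (Polynomial.C (g m)) * X ^ m).coeff j = if j ≤ n then g j else 0 := by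
  rw [finset_sum_coeff]
  have h : ∀ m ∈ range (n + 1), (C (g m) * X ^ m).coeff j = if j = m then g m else 0 := by
    intro m _
    rw [coeff_C_mul, coeff_X_pow]
    split_ifs <;> simp
  rw [Finset.sum_congr rfl h, Finset.sum_ite_eq]
  simp [Nat.lt_succ_iff]

lemma sum_C_coeff {R : Type*} [Semiring R] (P : R[X]) (n : ℕ) (h : ∀ j, n < j → P.coeff j = 0) :
    ∑ m ∈ range (n + 1), C (P.coeff m) * X ^ m = P := by
  ext j
  rw [coeff_sum_C_X_pow]
  split_ifs with hj
  · rfl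
  · exact (h j (by omega)).symm

lemma coeff_coeff_uSum (d : ℕ) (f : ℕ → Polynomial ℂ) (n l : ℕ) :
    ((∑ l' ∈ range (d + 1), ((f l').map (C : ℂ →+* Polynomial ℂ)) * (C X) ^ l').coeff n).coeff l
      = if l ≤ d then (f l).coeff n else 0 := by
  rw [finset_sum_coeff, finset_sum_coeff]
  have h : ∀ l' ∈ range (d + 1),
      ((((f l').map (C : ℂ →+* Polynomial ℂ)) * (C X) ^ l').coeff n).coeff l
        = if l = l' then (f l').coeff n else 0 := by
    intro l' _
    rw [← map_pow, coeff_mul_C, coeff_map, coeff_C_mul, coeff_X_pow]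
    split_ifs <;> simp
  rw [Finset.sum_congr rfl h, Finset.sum_ite_eq]
  simp [Nat.lt_succ_iff]

lemma sum_ite_le (v : ℕ → ℂ) (a b : ℕ) :
    ∑ m ∈ range (a + 1), (if m ≤ b then v m else 0)
      = ∑ m ∈ range (b + 1), (if m ≤ a then v m else 0) := by
  have key : ∀ x y : ℕ, ∑ m ∈ range (x + 1), (if m ≤ y then v m else 0)
      = ∑ m ∈ range (max x y + 1), (if m ≤ y ∧ m ≤ x then v m else 0) := by
    intro x y
    have h1 : ∑ m ∈ range (x + 1), (if m ≤ y then v m else 0)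
        = ∑ m ∈ range (x + 1), (if m ≤ y ∧ m ≤ x then v m else 0) := by
      refine Finset.sum_congr rfl fun m hm => ?_
      have hmx : m ≤ x := by have := mem_range.mp hm; omega
      by_cases hmy : m ≤ y
      · rw [if_pos hmy, if_pos ⟨hmy, hmx⟩]
      · rw [if_neg hmy, if_neg (fun hc => hmy hc.1)]
    rw [h1]
    refine Finset.sum_subset (Finset.range_subset_range.2 (by omega : x + 1 ≤ max x y + 1)) ?_
    intro m _ hm
    have : ¬ m ≤ x := by simp only [mem_range, not_lt] at hm; omega
    rw [if_neg (fun hc => this hc.2)]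
  rw [key a b, key b a, max_comm]
  exact Finset.sum_congr rfl fun m _ => by by_cases h1 : m ≤ b <;> by_cases h2 : m ≤ a <;> simp [h1, h2]

end PolyExistAux

namespace PolyExistAux

lemma solv (e : ℕ) (he : 1 ≤ e) (N : ℕ) :
    ∀ g₀ g₁ : Polynomial ℂ,
      (∀ j, e + N < j → g₀.coeff j = 0) →
      (∀ j, e + N ≤ j → g₁.coeff j = 0) →
      ∃ Sc : ℕ → Polynomial ℂ,
        (∀ m k, N + 1 < k → (Sc m).coeff k = 0) ∧
        (∑ m ∈ range (e + 1), Sc m * X ^ m) = g₀ ∧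
        (∑ m ∈ range (e + 1), derivative (Sc m) * X ^ m) = g₁ := by
  induction N with
  | zero =>
    intro g₀ g₁ h₀ h₁
    refine ⟨fun m => C (g₀.coeff m - (X * g₁).coeff m) + C (g₁.coeff m) * X, ?_, ?_, ?_⟩
    · intro m k hk
      rw [coeff_add, coeff_C, if_neg (by omega), coeff_C_mul, coeff_X, if_neg (by omega)]
      simp
    · have expand : ∀ m : ℕ, (C (g₀.coeff m - (X * g₁).coeff m) + C (g₁.coeff m) * X) * X ^ m
          = C (g₀.coeff m) * X ^ m - C ((X * g₁).coeff m) * X ^ m + C (g₁.coeff m) * X ^ (m + 1) := by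
        intro m
        rw [map_sub]
        ring
      rw [Finset.sum_congr rfl fun m _ => expand m, Finset.sum_add_distrib,
        Finset.sum_sub_distrib]
      have e1 : ∑ m ∈ range (e + 1), C (g₀.coeff m) * X ^ m = g₀ :=
        sum_C_coeff _ _ (fun j hj => h₀ j (by omega))
      have e2 : ∑ m ∈ range (e + 1), C ((X * g₁).coeff m) * X ^ m = X * g₁ := by
        refine sum_C_coeff _ _ (fun j hj => ?_)
        obtain ⟨j', rfl⟩ : ∃ j', j = j' + 1 := ⟨j - 1, by omega⟩
        rw [coeff_X_mul]
        exact h₁ j' (by omega)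
      have e3 : ∑ m ∈ range (e + 1), C (g₁.coeff m) * X ^ (m + 1) = X * g₁ := by
        have : ∀ m : ℕ, C (g₁.coeff m) * X ^ (m + 1) = X * (C (g₁.coeff m) * X ^ m) := by
          intro m; ring
        rw [Finset.sum_congr rfl fun m _ => this m, ← Finset.mul_sum,
          sum_C_coeff _ _ (fun j hj => h₁ j (by omega))]
      rw [e1, e2, e3]
      ring
    · have dstep : ∀ m : ℕ, derivative (C (g₀.coeff m - (X * g₁).coeff m) + C (g₁.coeff m) * X)
          = C (g₁.coeff m) := by
        intro m
        rw [derivative_add, derivative_C, derivative_C_mul_X, zero_add]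
      rw [Finset.sum_congr rfl fun m _ => by rw [dstep m]]
      exact sum_C_coeff _ _ (fun j hj => h₁ j (by omega))
  | succ N ih =>
    intro g₀ g₁ h₀ h₁
    set β : ℂ := g₀.coeff (e + N + 1) with hβ
    set γ : ℂ := g₁.coeff (e + N) with hγ
    set s : ℂ := γ - (N + 1 : ℂ) * β with hs
    set t : ℂ := β - s with ht
    obtain ⟨Sc', hP1, hP2, hP3⟩ := ih (g₀ - C β * X ^ (e + N + 1)) (g₁ - C γ * X ^ (e + N))
      (by
        intro j hj
        rw [coeff_sub, coeff_C_mul, coeff_X_pow]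
        by_cases hje : j = e + N + 1
        · rw [if_pos hje, mul_one, hje, hβ]; ring
        · rw [if_neg hje, mul_zero, h₀ j (by omega), sub_zero])
      (by
        intro j hj
        rw [coeff_sub, coeff_C_mul, coeff_X_pow]
        by_cases hje : j = e + N
        · rw [if_pos hje, mul_one, hje, hγ]; ring
        · rw [if_neg hje, mul_zero, h₁ j (by omega), sub_zero])
    refine ⟨fun m => Sc' m + ((if m = e then C t * X ^ (N + 1) else 0)
        + (if m = e - 1 then C s * X ^ (N + 2) else 0)), ?_, ?_, ?_⟩
    · intro m k hk
      rw [coeff_add, coeff_add, hP1 m k (by omega)]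
      have z1 : (if m = e then C t * X ^ (N + 1) else (0 : Polynomial ℂ)).coeff k = 0 := by
        split_ifs
        · rw [coeff_C_mul, coeff_X_pow, if_neg (by omega), mul_zero]
        · simp
      have z2 : (if m = e - 1 then C s * X ^ (N + 2) else (0 : Polynomial ℂ)).coeff k = 0 := by
        split_ifs
        · rw [coeff_C_mul, coeff_X_pow, if_neg (by omega), mul_zero]
        · simp
      rw [z1, z2]
      ring
    · rw [Finset.sum_congr rfl fun m (_ : m ∈ range (e+1)) => by rw [add_mul, add_mul],
        Finset.sum_add_distrib, Finset.sum_add_distrib, hP2]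
      have e1 : ∑ m ∈ range (e + 1), (if m = e then C t * X ^ (N + 1) else 0) * X ^ m
          = C t * X ^ (e + N + 1) := by
        rw [Finset.sum_congr rfl fun m (_ : m ∈ range (e+1)) => by rw [ite_mul, zero_mul],
          Finset.sum_ite_eq', if_pos (mem_range.mpr (by omega)),
          mul_assoc, ← pow_add, show N + 1 + e = e + N + 1 from by omega]
      have e2 : ∑ m ∈ range (e + 1), (if m = e - 1 then C s * X ^ (N + 2) else 0) * X ^ m
          = C s * X ^ (e + N + 1) := by
        rw [Finset.sum_congr rfl fun m (_ : m ∈ range (e+1)) => by rw [ite_mul, zero_mul],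
          Finset.sum_ite_eq', if_pos (mem_range.mpr (by omega)),
          mul_assoc, ← pow_add, show N + 2 + (e - 1) = e + N + 1 from by omega]
      rw [e1, e2]
      have hcomb : C t * X ^ (e + N + 1) + C s * X ^ (e + N + 1)
          = C β * X ^ (e + N + 1) := by
        rw [← add_mul, ← map_add, show t + s = β from by rw [ht]; ring]
      linear_combination hcomb
    · have dstep : ∀ m : ℕ, derivative (Sc' m + ((if m = e then C t * X ^ (N + 1) else 0)
          + (if m = e - 1 then C s * X ^ (N + 2) else 0)))
          = derivative (Sc' m) + ((if m = e then C (t * (N + 1 : ℂ)) * X ^ N else 0)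
            + (if m = e - 1 then C (s * (N + 2 : ℂ)) * X ^ (N + 1) else 0)) := by
        intro m
        rw [derivative_add, derivative_add]
        congr 1
        congr 1
        · split_ifs
          · rw [derivative_C_mul_X_pow]
            push_cast
            norm_num
          · simp
        · split_ifs
          · rw [derivative_C_mul_X_pow]
            push_cast
            norm_num
          · simp
      rw [Finset.sum_congr rfl fun m (_ : m ∈ range (e+1)) => by rw [dstep m],
        Finset.sum_congr rfl fun m (_ : m ∈ range (e+1)) => by rw [add_mul, add_mul],
        Finset.sum_add_distrib, Finset.sum_add_distrib, hP3]
      have e1 : ∑ m ∈ range (e + 1), (if m = e then C (t * (N + 1 : ℂ)) * X ^ N else 0) * X ^ m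
          = C (t * (N + 1 : ℂ)) * X ^ (e + N) := by
        rw [Finset.sum_congr rfl fun m (_ : m ∈ range (e+1)) => by rw [ite_mul, zero_mul],
          Finset.sum_ite_eq', if_pos (mem_range.mpr (by omega)),
          mul_assoc, ← pow_add, show N + e = e + N from by omega]
      have e2 : ∑ m ∈ range (e + 1),
            (if m = e - 1 then C (s * (N + 2 : ℂ)) * X ^ (N + 1) else 0) * X ^ m
          = C (s * (N + 2 : ℂ)) * X ^ (e + N) := by
        rw [Finset.sum_congr rfl fun m (_ : m ∈ range (e+1)) => by rw [ite_mul, zero_mul],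
          Finset.sum_ite_eq', if_pos (mem_range.mpr (by omega)),
          mul_assoc, ← pow_add, show N + 1 + (e - 1) = e + N from by omega]
      rw [e1, e2]
      have hcomb : C (t * (N + 1 : ℂ)) * X ^ (e + N) + C (s * (N + 2 : ℂ)) * X ^ (e + N)
          = C γ * X ^ (e + N) := by
        rw [← add_mul, ← map_add,
          show t * (N + 1 : ℂ) + s * (N + 2 : ℂ) = γ from by rw [ht, hs]; ring]
      linear_combination hcomb

lemma backward (d e : ℕ) (hd : 1 ≤ d) (he : 1 ≤ e) (f₀ f₁ : Polynomial ℂ)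
    (h0 : f₀.degree = (e + d : ℕ)) (h1 : f₁.degree = (e + d - 1 : ℕ))
    (hlead : f₁.leadingCoeff = (d : ℂ) * f₀.leadingCoeff) :
    ∃ f : ℕ → Polynomial ℂ, f 0 = f₀ ∧ f 1 = f₁ ∧
      (∀ l, 2 ≤ l → l ≤ d → (f l).degree ≤ (d + e - l : ℕ)) ∧
      (∑ l ∈ Finset.range (d + 1), ((f l).map (C : ℂ →+* Polynomial ℂ)) * (C X - X) ^ l).degree
        ≤ (e : WithBot ℕ) := by
  have hb0 : ∀ j, e + d < j → f₀.coeff j = 0 := by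
    intro j hj
    refine coeff_eq_zero_of_degree_lt ?_
    rw [h0]
    exact_mod_cast hj
  have hc0 : ∀ j, e + d - 1 < j → f₁.coeff j = 0 := by
    intro j hj
    refine coeff_eq_zero_of_degree_lt ?_
    rw [h1]
    exact_mod_cast hj
  have hn0 : f₀.natDegree = e + d := natDegree_eq_of_degree_eq_some h0
  have hn1 : f₁.natDegree = e + d - 1 := natDegree_eq_of_degree_eq_some h1
  set b : ℂ := f₀.coeff (e + d) with hb
  have hlead' : f₁.coeff (e + d - 1) = (d : ℂ) * b := by
    rw [show f₁.coeff (e + d - 1) = f₁.leadingCoeff from by rw [leadingCoeff, hn1], hlead, hb,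
      show f₀.coeff (e + d) = f₀.leadingCoeff from by rw [leadingCoeff, hn0]]
  obtain ⟨Sc', hQ1, hQ2, hQ3⟩ := solv e he (d - 1) (f₀ - C b * X ^ (e + d))
      (f₁ - C ((d : ℂ) * b) * X ^ (e + d - 1))
    (by
      intro j hj
      rw [coeff_sub, coeff_C_mul, coeff_X_pow]
      by_cases hje : j = e + d
      · rw [if_pos hje, mul_one, hje, hb]; ring
      · rw [if_neg hje, mul_zero, hb0 j (by omega), sub_zero])
    (by
      intro j hj
      rw [coeff_sub, coeff_C_mul, coeff_X_pow]
      by_cases hje : j = e + d - 1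
      · rw [if_pos hje, mul_one, hje, hlead']; ring
      · rw [if_neg hje, mul_zero, hc0 j (by omega), sub_zero])
  rw [show d - 1 + 1 = d from by omega] at hQ1
  set Sc : ℕ → Polynomial ℂ := fun m => Sc' m + (if m = e then C b * X ^ d else 0) with hSc
  have hP1 : ∀ m k, d < k → (Sc m).coeff k = 0 := by
    intro m k hk
    rw [hSc]
    simp only
    rw [coeff_add, hQ1 m k hk]
    split_ifs
    · rw [coeff_C_mul, coeff_X_pow, if_neg (by omega), mul_zero, add_zero]
    · simp
  have hP2 : ∑ m ∈ range (e + 1), Sc m * X ^ m = f₀ := by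
    rw [hSc]
    simp only
    rw [Finset.sum_congr rfl fun m (_ : m ∈ range (e + 1)) => by rw [add_mul],
      Finset.sum_add_distrib, hQ2,
      Finset.sum_congr rfl fun m (_ : m ∈ range (e + 1)) => by rw [ite_mul, zero_mul],
      Finset.sum_ite_eq', if_pos (mem_range.mpr (by omega)), mul_assoc, ← pow_add,
      show d + e = e + d from by omega]
    exact sub_add_cancel _ _
  have hP3 : ∑ m ∈ range (e + 1), derivative (Sc m) * X ^ m = f₁ := by
    rw [hSc]
    simp only
    have dstep : ∀ m : ℕ, derivative (Sc' m + (if m = e then C b * X ^ d else 0))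
        = derivative (Sc' m) + (if m = e then C (b * (d : ℂ)) * X ^ (d - 1) else 0) := by
      intro m
      rw [derivative_add]
      congr 1
      split_ifs
      · rw [derivative_C_mul_X_pow]
      · simp
    rw [Finset.sum_congr rfl fun m (_ : m ∈ range (e + 1)) => by rw [dstep m],
      Finset.sum_congr rfl fun m (_ : m ∈ range (e + 1)) => by rw [add_mul],
      Finset.sum_add_distrib, hQ3,
      Finset.sum_congr rfl fun m (_ : m ∈ range (e + 1)) => by rw [ite_mul, zero_mul],
      Finset.sum_ite_eq', if_pos (mem_range.mpr (by omega)), mul_assoc, ← pow_add,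
      show d - 1 + e = e + d - 1 from by omega, show (b * (d : ℂ)) = (d : ℂ) * b from by ring]
    exact sub_add_cancel _ _
  set S : A := ∑ m ∈ range (e + 1), C (Sc m) * X ^ m with hSdef
  have hScoeff : ∀ n, S.coeff n = if n ≤ e then Sc n else 0 := fun n => coeff_sum_C_X_pow Sc e n
  have master : ∀ j l, ((Phi S).coeff j).coeff l
      = ∑ m ∈ range (e + 1),
          (if m ≤ j then ((j - m + l).choose (j - m) : ℂ) * (Sc m).coeff (j - m + l) else 0) := by
    intro j l
    rw [coeff_coeff_Phi]
    have step : ∀ m ∈ range (j + 1),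
        ((j - m + l).choose (j - m) : ℂ) * (S.coeff m).coeff (j - m + l)
          = if m ≤ e then ((j - m + l).choose (j - m) : ℂ) * (Sc m).coeff (j - m + l) else 0 := by
      intro m _
      rw [hScoeff]
      split_ifs
      · rfl
      · simp
    rw [Finset.sum_congr rfl step,
      sum_ite_le (fun m => ((j - m + l).choose (j - m) : ℂ) * (Sc m).coeff (j - m + l)) j e]
  have hzero_j : ∀ j l, e + d < j → ((Phi S).coeff j).coeff l = 0 := by
    intro j l hj
    rw [master]
    refine Finset.sum_eq_zero fun m hm => ?_
    have hme : m ≤ e := by have := mem_range.mp hm; omega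
    split_ifs with hmj
    · rw [hP1 m _ (by omega), mul_zero]
    · rfl
  have hzero_l : ∀ j l, d < l → ((Phi S).coeff j).coeff l = 0 := by
    intro j l hl
    rw [master]
    refine Finset.sum_eq_zero fun m hm => ?_
    split_ifs with hmj
    · rw [hP1 m _ (by omega), mul_zero]
    · rfl
  set fl : ℕ → Polynomial ℂ :=
    fun l => ∑ j ∈ range (e + d + 1), C (((Phi S).coeff j).coeff l) * X ^ j with hfl
  have hflc : ∀ l j, (fl l).coeff j = ((Phi S).coeff j).coeff l := by
    intro l j
    rw [hfl]
    simp only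
    rw [coeff_sum_C_X_pow]
    split_ifs with h
    · rfl
    · exact (hzero_j j l (by omega)).symm
  have hf0 : fl 0 = f₀ := by
    ext j
    rw [hflc, master]
    have step : ∀ m ∈ range (e + 1),
        (if m ≤ j then ((j - m + 0).choose (j - m) : ℂ) * (Sc m).coeff (j - m + 0) else 0)
          = (Sc m * X ^ m).coeff j := by
      intro m _
      rw [coeff_mul_X_pow']
      split_ifs with h
      · rw [Nat.add_zero, Nat.choose_self, Nat.cast_one, one_mul]
      · rfl
    rw [Finset.sum_congr rfl step, ← finset_sum_coeff, hP2]
  have hf1 : fl 1 = f₁ := by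
    ext j
    rw [hflc, master]
    have step : ∀ m ∈ range (e + 1),
        (if m ≤ j then ((j - m + 1).choose (j - m) : ℂ) * (Sc m).coeff (j - m + 1) else 0)
          = (derivative (Sc m) * X ^ m).coeff j := by
      intro m _
      rw [coeff_mul_X_pow']
      split_ifs with h
      · rw [coeff_derivative, Nat.choose_succ_self_right]
        push_cast
        ring
      · rfl
    rw [Finset.sum_congr rfl step, ← finset_sum_coeff, hP3]
  have hdeg : ∀ l, 2 ≤ l → l ≤ d → (fl l).degree ≤ ((d + e - l : ℕ) : WithBot ℕ) := by
    intro l h2 hld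
    refine (degree_le_iff_coeff_zero _ _).mpr ?_
    intro j hj
    have hj' : d + e - l < j := by exact_mod_cast hj
    rw [hflc, master]
    refine Finset.sum_eq_zero fun m hm => ?_
    have hme : m ≤ e := by have := mem_range.mp hm; omega
    split_ifs with hmj
    · rw [hP1 m _ (by omega), mul_zero]
    · rfl
  have u_eq : ∑ l' ∈ range (d + 1), ((fl l').map (C : ℂ →+* Polynomial ℂ)) * (C X) ^ l'
      = Phi S := by
    refine Polynomial.ext fun n => Polynomial.ext fun l => ?_
    rw [coeff_coeff_uSum d fl n l]
    split_ifs with h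
    · rw [hflc]
    · exact (hzero_l n l (by omega)).symm
  have hbig : ∑ l' ∈ range (d + 1), ((fl l').map (C : ℂ →+* Polynomial ℂ)) * (C X - X) ^ l'
      = S := by
    rw [← Psi_bigSum, u_eq, PsiPhi]
  have hSdeg : S.degree ≤ (e : WithBot ℕ) := by
    refine (degree_le_iff_coeff_zero _ _).mpr ?_
    intro m hm
    have hm' : e < m := by exact_mod_cast hm
    rw [hScoeff, if_neg (by omega)]
  exact ⟨fl, hf0, hf1, hdeg, by rw [hbig]; exact hSdeg⟩


lemma forward (d e : ℕ) (hd : 1 ≤ d) (he : 1 ≤ e) (f : ℕ → Polynomial ℂ)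
    (h0 : (f 0).degree = (e + d : ℕ)) (h1 : (f 1).degree = (e + d - 1 : ℕ))
    (hS : (∑ l ∈ Finset.range (d + 1), ((f l).map (C : ℂ →+* Polynomial ℂ)) * (C X - X) ^ l).degree
        ≤ (e : WithBot ℕ)) :
    (f 1).leadingCoeff = (d : ℂ) * (f 0).leadingCoeff := by
  set S : A := ∑ l ∈ range (d + 1), ((f l).map (C : ℂ →+* Polynomial ℂ)) * (C X - X) ^ l with hSdef
  set u : A := ∑ l ∈ range (d + 1), ((f l).map (C : ℂ →+* Polynomial ℂ)) * (C X) ^ l with hu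
  have hPhiS : Phi S = u := Phi_bigSum d f
  have hPsiu : Psi u = S := Psi_bigSum d f
  have hucoeff : ∀ n l, (u.coeff n).coeff l = if l ≤ d then (f l).coeff n else 0 :=
    fun n l => coeff_coeff_uSum d f n l
  have hdz : ∀ m k, d < k → (S.coeff m).coeff k = 0 := by
    intro m k hk
    rw [← hPsiu, coeff_coeff_Psi]
    refine Finset.sum_eq_zero fun m' _ => ?_
    rw [hucoeff, if_neg (by omega), mul_zero]
  have hwz : ∀ m, e < m → S.coeff m = 0 := by
    intro m hm
    refine coeff_eq_zero_of_degree_lt (lt_of_le_of_lt hS ?_)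
    exact_mod_cast hm
  have key0 : (f 0).coeff (e + d) = (S.coeff e).coeff d := by
    have h := hucoeff (e + d) 0
    rw [if_pos (by omega)] at h
    rw [← h, ← hPhiS, coeff_coeff_Phi]
    rw [Finset.sum_eq_single_of_mem e (mem_range.mpr (by omega))]
    · rw [show e + d - e = d from by omega, Nat.add_zero, Nat.choose_self, Nat.cast_one, one_mul]
    · intro m hm hne
      rcases Nat.lt_or_ge m e with h' | h'
      · rw [hdz m _ (by omega), mul_zero]
      · rw [hwz m (by omega), coeff_zero, mul_zero]
  have key1 : (f 1).coeff (e + d - 1) = (d : ℂ) * (S.coeff e).coeff d := by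
    have h := hucoeff (e + d - 1) 1
    rw [if_pos (by omega)] at h
    rw [← h, ← hPhiS, coeff_coeff_Phi]
    rw [Finset.sum_eq_single_of_mem e (mem_range.mpr (by omega))]
    · rw [show e + d - 1 - e = d - 1 from by omega, show d - 1 + 1 = d from by omega,
        Nat.choose_symm hd, Nat.choose_one_right]
    · intro m hm hne
      rcases Nat.lt_or_ge m e with h' | h'
      · rw [hdz m _ (by omega), mul_zero]
      · rw [hwz m (by omega), coeff_zero, mul_zero]
  rw [leadingCoeff, leadingCoeff, natDegree_eq_of_degree_eq_some h0,
    natDegree_eq_of_degree_eq_some h1, key0, key1]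

end PolyExistAux

end

open Polynomial

theorem poly_existence_iff_leading (d e : ℕ) (hd : 1 ≤ d) (he : 1 ≤ e)
    (f₀ f₁ : Polynomial ℂ)
    (h0 : f₀.degree = (e + d : ℕ)) (h1 : f₁.degree = (e + d - 1 : ℕ)) :
    (∃ f : ℕ → Polynomial ℂ, f 0 = f₀ ∧ f 1 = f₁ ∧
      (∀ l, 2 ≤ l → l ≤ d → (f l).degree ≤ (d + e - l : ℕ)) ∧
      (∑ l ∈ Finset.range (d + 1),
        ((f l).map (Polynomial.C : ℂ →+* Polynomial ℂ)) *
          (Polynomial.C Polynomial.X - Polynomial.X) ^ l).degree ≤ (e : WithBot ℕ)) ↔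
    f₁.leadingCoeff = (d : ℂ) * f₀.leadingCoeff := by
  constructor
  · rintro ⟨f, hf0, hf1, hdeg, hsum⟩
    rw [← hf0, ← hf1]
    exact PolyExistAux.forward d e hd he f (by rw [hf0]; exact h0) (by rw [hf1]; exact h1) hsum
  · intro hlead
    exact PolyExistAux.backward d e hd he f₀ f₁ h0 h1 hlead
end

section
/- Let M be the d×d matrix with entries M_{i,l} = C(l, i-1) (binomial coefficient 'l choose i-1') for 1 ≤ i,l ≤ d. Then M is invertible, and the (1,1) entry of M⁻¹ equals d. -/
/-!
Pascal's rule factors `M = J * T`, where `T i l = C(l, i)` is the upper unitriangular Pascal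
matrix and `J` is lower bidiagonal with ones on both diagonals; hence `det M = 1` and
`M⁻¹ = T⁻¹ * J⁻¹`. The first row of `T⁻¹` (alternating binomial sums) and the first column of
`J⁻¹` (a telescoping recurrence) are both `((-1) ^ k)ₖ`, so `M⁻¹ 0 0 = ∑ k < d, (-1) ^ (2 * k) = d`.
-/

open Finset

namespace Matrix

theorem mul_inv_apply_eq_dotProduct {m R : Type*} [Fintype m] [DecidableEq m] [CommRing R]
    {A B : Matrix m m R} (hA : IsUnit A.det) (hB : IsUnit B.det) {u v : m → R} {i j : m}
    (hu : u ᵥ* B = Pi.single i 1) (hv : A *ᵥ v = Pi.single j 1) :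
    (A * B)⁻¹ i j = u ⬝ᵥ v := by
  have hu' : B⁻¹.row i = u := by
    rw [← single_one_vecMul, ← hu, vecMul_vecMul, mul_nonsing_inv _ hB, vecMul_one]
  have hv' : A⁻¹.col j = v := by
    rw [← mulVec_single_one, ← hv, mulVec_mulVec, nonsing_inv_mul _ hA, one_mulVec]
  rw [mul_inv_rev, mul_apply, ← hu', ← hv']
  rfl

variable (R : Type*) [CommRing R] (n : ℕ)

def upperPascal : Matrix (Fin n) (Fin n) R :=
  of fun i l => (l.1.choose i.1 : R)

def lowerBidiagonalOnes : Matrix (Fin n) (Fin n) R :=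
  of fun i k => if i.1 = k.1 ∨ i.1 = k.1 + 1 then 1 else 0

variable {R n}

theorem lowerBidiagonalOnes_sum_mul (f : ℕ → R) (i : Fin n) :
    ∑ k, lowerBidiagonalOnes R n i k * f k = f i + if i.1 = 0 then 0 else f (i.1 - 1) := by
  have hsplit : ∀ k : ℕ, (if i.1 = k ∨ i.1 = k + 1 then (1 : R) else 0) * f k
      = (if i.1 = k then f k else 0) + if i.1 = k + 1 then f k else 0 := by
    intro k
    by_cases h : i.1 = k <;> simp [h]
  simp only [lowerBidiagonalOnes, of_apply]
  rw [Fin.sum_univ_eq_sum_range (fun k => (if i.1 = k ∨ i.1 = k + 1 then (1 : R) else 0) * f k),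
    sum_congr rfl fun k _ => hsplit k, sum_add_distrib, sum_ite_eq, if_pos (mem_range.2 i.2)]
  congr 1
  rcases i with ⟨_ | j, hj⟩
  · simp
  · simp only [Nat.add_right_cancel_iff, sum_ite_eq, mem_range]
    simp [show j < n by omega]

theorem lowerBidiagonalOnes_mul_upperPascal (i l : Fin n) :
    (lowerBidiagonalOnes R n * upperPascal R n) i l = ((l.1 + 1).choose i.1 : R) := by
  rw [mul_apply]
  refine (lowerBidiagonalOnes_sum_mul (fun k => (l.1.choose k : R)) i).trans ?_
  rcases i with ⟨_ | j, hj⟩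
  · simp
  · simp [Nat.choose_succ_succ', add_comm]

theorem lowerBidiagonalOnes_mulVec_neg_one_pow [NeZero n] :
    lowerBidiagonalOnes R n *ᵥ (fun k => (-1) ^ k.1) = Pi.single 0 1 := by
  ext i
  refine (lowerBidiagonalOnes_sum_mul (fun k => (-1 : R) ^ k) i).trans ?_
  rcases i with ⟨_ | j, hj⟩
  · simp
  · simp [pow_succ, Fin.ext_iff]

theorem neg_one_pow_vecMul_upperPascal [NeZero n] :
    (fun k => (-1) ^ k.1) ᵥ* upperPascal R n = Pi.single 0 1 := by
  ext l
  have hsum : ∑ k ∈ range (l.1 + 1), (-1 : R) ^ k * (l.1.choose k : R) =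
      if l.1 = 0 then 1 else 0 := by
    exact_mod_cast congrArg (Int.cast : ℤ → R) (Int.alternating_sum_range_choose (n := l.1))
  simp only [vecMul, dotProduct, upperPascal, of_apply]
  rw [Fin.sum_univ_eq_sum_range (fun k => (-1 : R) ^ k * (l.1.choose k : R)),
    ← sum_subset (range_subset_range.2 l.2) fun k _ hk => ?_, hsum]
  · simp only [Pi.single_apply, Fin.ext_iff, Fin.val_zero]
  · simp [Nat.choose_eq_zero_of_lt (not_lt.1 (mt mem_range.2 hk))]

theorem det_lowerBidiagonalOnes : (lowerBidiagonalOnes R n).det = 1 := by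
  rw [det_of_isLowerTriangular _ fun i k (h : OrderDual.toDual k < OrderDual.toDual i) => ?_]
  · simp [lowerBidiagonalOnes]
  · have : i.1 < k.1 := h
    simp only [lowerBidiagonalOnes, of_apply]
    rw [if_neg (by omega)]

theorem det_upperPascal : (upperPascal R n).det = 1 := by
  rw [det_of_isUpperTriangular fun i l (h : l < i) => ?_]
  · simp [upperPascal]
  · simp [upperPascal, Nat.choose_eq_zero_of_lt h]

end Matrix

theorem binom_matrix_inv_entry (d : ℕ) (hd : 0 < d)
    (M : Matrix (Fin d) (Fin d) ℚ)
    (hM : ∀ i l : Fin d, M i l = (Nat.choose (l.1 + 1) i.1 : ℚ)) :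
    IsUnit M ∧ M⁻¹ ⟨0, hd⟩ ⟨0, hd⟩ = (d : ℚ) := by
  have : NeZero d := ⟨hd.ne'⟩
  have hJT : M = Matrix.lowerBidiagonalOnes ℚ d * Matrix.upperPascal ℚ d :=
    Matrix.ext fun i l => by rw [hM, Matrix.lowerBidiagonalOnes_mul_upperPascal]
  have hdet : M.det = 1 := by
    rw [hJT, Matrix.det_mul, Matrix.det_lowerBidiagonalOnes, Matrix.det_upperPascal, one_mul]
  refine ⟨(Matrix.isUnit_iff_isUnit_det M).2 (hdet ▸ isUnit_one), ?_⟩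
  rw [hJT, show (⟨0, hd⟩ : Fin d) = 0 from Fin.ext (Fin.val_zero d).symm,
    Matrix.mul_inv_apply_eq_dotProduct (by simp [Matrix.det_lowerBidiagonalOnes])
      (by simp [Matrix.det_upperPascal]) Matrix.neg_one_pow_vecMul_upperPascal
      Matrix.lowerBidiagonalOnes_mulVec_neg_one_pow]
  simp [dotProduct, ← mul_pow]
end
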